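/- arXiv:1807.02353 — 9 statements merged into one kernel-verified Lean document; each statement's English description precedes it below -/
import Mathlib

section
/- Let (𝒜, ℬ, θ_*, θ^*) be an Ω-system. Then a morphism ψ of ℬ is an isomorphism (respectively a monomorphism, respectively an epimorphism) if and only if θ^*(ψ) is an isomorphism (respectively a monomorphism, respectively an epimorphism) in 𝒜; and a composable pair N' → N → N'' in ℬ with zero composite is exact at N if and only if its image θ^*(N') → θ^*(N) → θ^*(N'') is exact at θ^*(N). -/
open CategoryTheory CategoryTheory.Limits

/-- An Ω-system: abelian categories `A`, `B` with additive functors `push : A ⥤ B`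
(denoted `θ_*`) and `pull : B ⥤ A` (denoted `θ^*`) such that (OP1) `push` is left adjoint
to `pull`, (OP2) the counit of the adjunction is an isomorphism, and (OP3) `pull`
sends epimorphisms to epimorphisms. -/
structure OmegaSystem {A : Type*} {B : Type*} [Category A] [Category B]
    [Abelian A] [Abelian B] (push : A ⥤ B) (pull : B ⥤ A)
    [push.Additive] [pull.Additive] where
  adj : push ⊣ pull
  isIso_counit : IsIso adj.counit
  pull_epi : ∀ ⦃X Y : B⦄ (f : X ⟶ Y), Epi f → Epi (pull.map f)

/-- For an Ω-system `(𝒜, ℬ, θ_*, θ^*)`: a morphism `ψ` of `ℬ` is an isomorphism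
(resp. a monomorphism, resp. an epimorphism) iff `θ^*(ψ)` is; and a composable pair with
zero composite in `ℬ` is exact iff its image under `θ^*` is exact. -/
theorem omegaSystem_pull_reflects_and_preserves
    {A : Type*} {B : Type*} [Category A] [Category B] [Abelian A] [Abelian B]
    (push : A ⥤ B) (pull : B ⥤ A) [push.Additive] [pull.Additive]
    (S : OmegaSystem push pull) :
    (∀ {N N' : B} (ψ : N ⟶ N'),
      (IsIso ψ ↔ IsIso (pull.map ψ)) ∧
      (Mono ψ ↔ Mono (pull.map ψ)) ∧
      (Epi ψ ↔ Epi (pull.map ψ))) ∧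
    (∀ {N' N N'' : B} (f : N' ⟶ N) (g : N ⟶ N'') (w : f ≫ g = 0)
        (w' : pull.map f ≫ pull.map g = 0),
      (ShortComplex.mk f g w).Exact ↔ (ShortComplex.mk (pull.map f) (pull.map g) w').Exact) := by
  have := S.isIso_counit
  have hff : pull.FullyFaithful := S.adj.fullyFaithfulROfIsIsoCounit
  have : pull.Faithful := hff.faithful
  have : pull.Full := hff.full
  have hlim : PreservesLimitsOfSize.{0,0} pull := S.adj.rightAdjoint_preservesLimits
  have hepi : pull.PreservesEpimorphisms := ⟨fun f hf => S.pull_epi f hf⟩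
  have hhom : pull.PreservesHomology :=
    Functor.preservesHomology_of_preservesEpis_and_kernels pull
  constructor
  · intro N N' ψ
    refine ⟨⟨fun h => inferInstance, fun h => isIso_of_fully_faithful pull ψ⟩,
      ⟨fun h => pull.map_mono ψ, fun h => pull.mono_of_mono_map h⟩,
      ⟨fun h => S.pull_epi ψ h, fun h => pull.epi_of_epi_map h⟩⟩
  · intro N' N N'' f g w w'
    exact ((ShortComplex.mk f g w).exact_map_iff_of_faithful pull).symm
end

section
/- Let (𝒜, ℬ, θ_*, θ^*) be an Ω-system, let X and Y be projective objects of ℬ, and let f : X → Y be a morphism. Let (P_*, ∂_*) be a nonnegatively graded chain complex in 𝒜 with augmentation ε : P_0 → θ^*(X) (with ε∘∂_1 = 0) such that each P_n is projective and the augmented complex θ_*(P_*) → θ_*θ^*(X) → 0 is exact; and let (P'_*, ∂'_*) be a nonnegatively graded chain complex in 𝒜 with augmentation ε' : P'_0 → θ^*(Y) (with ε'∘∂'_1 = 0) such that for each n ≥ 1 the homology H_n(P'_*, ∂'_*) is isomorphic to an object in the essential image of θ^* and ε' induces an isomorphism H_0(P'_*, ∂'_*) ≅ θ^*(Y). Then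 there exists a chain map f_* : (P_*, ∂_*) → (P'_*, ∂'_*) with ε' ∘ f_0 = θ^*(f) ∘ ε, and any two such chain maps are chain homotopic. -/
open CategoryTheory CategoryTheory.Limits

/-- Given an Ω-system, projective objects `X`, `Y` of `ℬ` and `f : X ⟶ Y`, a complex
`(P_*, ∂_*)` of projectives augmented over `θ^*(X)` whose image under `θ_*` is exact
(conditions (Ω-1), (Ω-2)), and a complex `(P'_*, ∂'_*)` augmented over `θ^*(Y)`
satisfying condition (Ω-3), there is a chain map `f_* : P_* ⟶ P'_*` compatible with the
augmentations and `θ^*(f)`, and it is unique up to chain homotopy. -/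
theorem omegaSystem_lift_exists_unique_up_to_homotopy
    {A : Type*} {B : Type*} [Category A] [Category B] [Abelian A] [Abelian B]
    (push : A ⥤ B) (pull : B ⥤ A) [push.Additive] [pull.Additive]
    (S : OmegaSystem push pull)
    {X Y : B} (hX : Projective X) (hY : Projective Y) (f : X ⟶ Y)
    (P P' : ChainComplex A ℕ)
    (ε : P.X 0 ⟶ pull.obj X) (hεw : P.d 1 0 ≫ ε = 0)
    (ε' : P'.X 0 ⟶ pull.obj Y) (hε'w : P'.d 1 0 ≫ ε' = 0)
    -- (Ω-1) for `P`
    (hproj : ∀ n, Projective (P.X n))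
    -- (Ω-2) for `P`: the pushed augmented complex is exact
    (hpush_epi : Epi (push.map ε))
    (hpush_exact₀ : (ShortComplex.mk (push.map (P.d 1 0)) (push.map ε)
      (by rw [← push.map_comp, hεw, Functor.map_zero])).Exact)
    (hpush_exact : ∀ n : ℕ, (ShortComplex.mk (push.map (P.d (n + 2) (n + 1)))
      (push.map (P.d (n + 1) n))
      (by rw [← push.map_comp, HomologicalComplex.d_comp_d, Functor.map_zero])).Exact)
    -- (Ω-3) for `P'`: homology in positive degrees lies in the essential image of `θ^*`,
    -- and `ε'` induces an isomorphism `H₀(P') ≅ θ^*(Y)`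
    (hH' : ∀ n : ℕ, 1 ≤ n → pull.essImage (P'.homology n))
    (hε'_epi : Epi ε')
    (hε'_exact : (ShortComplex.mk (P'.d 1 0) ε' hε'w).Exact) :
    (∃ φ : P ⟶ P', φ.f 0 ≫ ε' = ε ≫ pull.map f) ∧
    (∀ φ₁ φ₂ : P ⟶ P', φ₁.f 0 ≫ ε' = ε ≫ pull.map f →
      φ₂.f 0 ≫ ε' = ε ≫ pull.map f → Nonempty (Homotopy φ₁ φ₂)) := by
  classical
  haveI : pull.PreservesEpimorphisms := ⟨fun g hg => S.pull_epi g hg⟩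
  haveI hQproj : ∀ n, Projective (push.obj (P.X n)) :=
    fun n => S.adj.map_projective _ (hproj n)
  haveI := S.isIso_counit
  haveI hPPX : Projective (push.obj (pull.obj X)) :=
    Projective.of_iso (asIso (S.adj.counit.app X)).symm hX
  haveI := hpush_epi
  -- Step 1: a contracting homotopy for the pushed complex.
  have hH : ∀ n : ℕ, ∃ (s : push.obj (P.X n) ⟶ push.obj (P.X (n + 1)))
      (s' : push.obj (P.X (n + 1)) ⟶ push.obj (P.X (n + 2))),
      s' ≫ push.map (P.d (n + 2) (n + 1)) + push.map (P.d (n + 1) n) ≫ s = 𝟙 _ := by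
    intro n
    induction n with
    | zero =>
      obtain ⟨t, ht⟩ : ∃ t : push.obj (pull.obj X) ⟶ push.obj (P.X 0),
          t ≫ push.map ε = 𝟙 _ :=
        ⟨Projective.factorThru (𝟙 _) (push.map ε), Projective.factorThru_comp _ _⟩
      have hw0 : (𝟙 (push.obj (P.X 0)) - push.map ε ≫ t) ≫ push.map ε = 0 := by
        rw [Preadditive.sub_comp, Category.id_comp, Category.assoc, ht, Category.comp_id, sub_self]
      obtain ⟨s0, hs0⟩ : ∃ s0 : push.obj (P.X 0) ⟶ push.obj (P.X 1),
          s0 ≫ push.map (P.d 1 0) = 𝟙 (push.obj (P.X 0)) - push.map ε ≫ t :=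
        ⟨hpush_exact₀.liftFromProjective _ hw0, hpush_exact₀.liftFromProjective_comp _ hw0⟩
      have hde : push.map (P.d 1 0) ≫ push.map ε = 0 := by
        rw [← push.map_comp, hεw, Functor.map_zero]
      have hw1 : (𝟙 (push.obj (P.X 1)) - push.map (P.d 1 0) ≫ s0) ≫ push.map (P.d 1 0) = 0 := by
        rw [Preadditive.sub_comp, Category.id_comp, Category.assoc, hs0, Preadditive.comp_sub, Category.comp_id,
          sub_sub_cancel, ← Category.assoc, hde, zero_comp]
      refine ⟨s0, (hpush_exact 0).liftFromProjective _ hw1, ?_⟩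
      rw [(hpush_exact 0).liftFromProjective_comp _ hw1]
      abel
    | succ n ih =>
      obtain ⟨s, s', hrel⟩ := ih
      have hdd : push.map (P.d (n + 2) (n + 1)) ≫ push.map (P.d (n + 1) n) = 0 := by
        rw [← push.map_comp, HomologicalComplex.d_comp_d, Functor.map_zero]
      have hs' : s' ≫ push.map (P.d (n + 2) (n + 1)) =
          𝟙 _ - push.map (P.d (n + 1) n) ≫ s := by
        rw [← hrel]; abel
      have hw : (𝟙 (push.obj (P.X (n + 2))) - push.map (P.d (n + 2) (n + 1)) ≫ s') ≫
          push.map (P.d (n + 2) (n + 1)) = 0 := by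
        rw [Preadditive.sub_comp, Category.id_comp, Category.assoc, hs', Preadditive.comp_sub, Category.comp_id,
          sub_sub_cancel, ← Category.assoc, hdd, zero_comp]
      refine ⟨s', (hpush_exact (n + 1)).liftFromProjective _ hw, ?_⟩
      rw [(hpush_exact (n + 1)).liftFromProjective_comp _ hw]
      abel
  -- Step 2: Hom-exactness of `P` against any `pull.obj Z`.
  have lemA : ∀ (n : ℕ) (Z : B) (h : P.X (n + 1) ⟶ pull.obj Z),
      P.d (n + 2) (n + 1) ≫ h = 0 →
      ∃ c : P.X n ⟶ pull.obj Z, P.d (n + 1) n ≫ c = h := by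
    intro n Z h hdh
    obtain ⟨s, s', hrel⟩ := hH n
    have hu : push.map (P.d (n + 2) (n + 1)) ≫ push.map h ≫ S.adj.counit.app Z = 0 := by
      rw [← Category.assoc, ← push.map_comp, hdh, Functor.map_zero, zero_comp]
    refine ⟨S.adj.homEquiv _ _ (s ≫ push.map h ≫ S.adj.counit.app Z), ?_⟩
    have hs : push.map (P.d (n + 1) n) ≫ s =
        𝟙 _ - s' ≫ push.map (P.d (n + 2) (n + 1)) := by
      rw [← hrel]; abel
    have h1 : push.map (P.d (n + 1) n) ≫ s ≫ push.map h ≫ S.adj.counit.app Z =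
        push.map h ≫ S.adj.counit.app Z := by
      rw [← Category.assoc, hs, Preadditive.sub_comp, Category.id_comp, Category.assoc, hu,
        comp_zero, sub_zero]
    have hcu : push.map h ≫ S.adj.counit.app Z = (S.adj.homEquiv _ _).symm h :=
      (S.adj.homEquiv_counit _ _ _).symm
    rw [← Adjunction.homEquiv_naturality_left, h1, hcu]
    exact Equiv.apply_symm_apply _ _
  -- Step 3: killing obstruction classes in the homology of `P'`.
  have lemE : ∀ (n i : ℕ) (G : P.X (n + 1) ⟶ P'.X (i + 1)), G ≫ P'.d (i + 1) i = 0 →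
      (∃ w : P.X (n + 2) ⟶ P'.X (i + 2), P.d (n + 2) (n + 1) ≫ G = w ≫ P'.d (i + 2) (i + 1)) →
      ∃ (c : P.X n ⟶ P'.X (i + 1)) (b : P.X (n + 1) ⟶ P'.X (i + 2)),
        c ≫ P'.d (i + 1) i = 0 ∧ b ≫ P'.d (i + 2) (i + 1) = G - P.d (n + 1) n ≫ c := by
    intro n i G hG hGd
    obtain ⟨w, hw⟩ := hGd
    obtain ⟨Z, ⟨α⟩⟩ := hH' (i + 1) (Nat.le_add_left 1 i)
    haveI := hproj n; haveI := hproj (n + 1)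
    have g1 : P.X (n + 1) ⟶ P'.cycles (i + 1) :=
      P'.liftCycles G i (ChainComplex.next_nat_succ i) hG
    set g1 : P.X (n + 1) ⟶ P'.cycles (i + 1) :=
      P'.liftCycles G i (ChainComplex.next_nat_succ i) hG with hg1def
    have hg1i : g1 ≫ P'.iCycles (i + 1) = G := P'.liftCycles_i _ _ _ _
    have hdg : P.d (n + 2) (n + 1) ≫ g1 = w ≫ P'.toCycles (i + 2) (i + 1) := by
      rw [← cancel_mono (P'.iCycles (i + 1))]
      rw [Category.assoc, hg1i, Category.assoc, HomologicalComplex.toCycles_i, hw]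
    have hobs : P.d (n + 2) (n + 1) ≫ (g1 ≫ P'.homologyπ (i + 1) ≫ α.inv) = 0 := by
      simp only [← Category.assoc]
      rw [hdg]
      simp [Category.assoc, HomologicalComplex.toCycles_comp_homologyπ]
    obtain ⟨cb, hcb⟩ := lemA n Z (g1 ≫ P'.homologyπ (i + 1) ≫ α.inv) hobs
    set c1 : P.X n ⟶ P'.cycles (i + 1) :=
      Projective.factorThru (cb ≫ α.hom) (P'.homologyπ (i + 1)) with hc1def
    have hc1 : c1 ≫ P'.homologyπ (i + 1) = cb ≫ α.hom := Projective.factorThru_comp _ _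
    have key : (g1 - P.d (n + 1) n ≫ c1) ≫ P'.homologyπ (i + 1) = 0 := by
      rw [Preadditive.sub_comp, Category.assoc, hc1, ← Category.assoc, hcb]
      simp [Category.assoc]
    have hex : (ShortComplex.mk (P'.toCycles (i + 2) (i + 1)) (P'.homologyπ (i + 1))
        (P'.toCycles_comp_homologyπ _ _)).Exact :=
      ShortComplex.exact_of_g_is_cokernel _
        (P'.homologyIsCokernel _ _ ((ComplexShape.down ℕ).prev_eq' (by simp)))
    obtain ⟨bb, hbb⟩ : ∃ bb : P.X (n + 1) ⟶ P'.X (i + 2),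
        bb ≫ P'.toCycles (i + 2) (i + 1) = g1 - P.d (n + 1) n ≫ c1 :=
      ⟨hex.liftFromProjective _ key, hex.liftFromProjective_comp _ key⟩
    refine ⟨c1 ≫ P'.iCycles (i + 1), bb, ?_, ?_⟩
    · rw [Category.assoc, HomologicalComplex.iCycles_d, comp_zero]
    · calc bb ≫ P'.d (i + 2) (i + 1)
          = bb ≫ P'.toCycles (i + 2) (i + 1) ≫ P'.iCycles (i + 1) := by
            rw [HomologicalComplex.toCycles_i]
        _ = (g1 - P.d (n + 1) n ≫ c1) ≫ P'.iCycles (i + 1) := by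
            rw [← Category.assoc, hbb]
        _ = G - P.d (n + 1) n ≫ (c1 ≫ P'.iCycles (i + 1)) := by
            rw [Preadditive.sub_comp, hg1i, Category.assoc]
  haveI := hε'_epi
  constructor
  · -- existence of the chain map
    haveI := hproj 0; haveI := hproj 1
    obtain ⟨a0, ha0⟩ : ∃ a0 : P.X 0 ⟶ P'.X 0, a0 ≫ ε' = ε ≫ pull.map f :=
      ⟨Projective.factorThru _ _, Projective.factorThru_comp _ _⟩
    have hl0 : ∃ b : P.X 1 ⟶ P'.X 1, b ≫ P'.d 1 0 = P.d 1 0 ≫ a0 := by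
      have hz : (P.d 1 0 ≫ a0) ≫ ε' = 0 := by
        rw [Category.assoc, ha0, ← Category.assoc, hεw, zero_comp]
      exact ⟨hε'_exact.liftFromProjective _ hz, hε'_exact.liftFromProjective_comp _ hz⟩
    have step : ∀ (n : ℕ) (a : P.X n ⟶ P'.X n),
        (∃ b : P.X (n + 1) ⟶ P'.X (n + 1), b ≫ P'.d (n + 1) n = P.d (n + 1) n ≫ a) →
        ∃ b : P.X (n + 1) ⟶ P'.X (n + 1), (b ≫ P'.d (n + 1) n = P.d (n + 1) n ≫ a) ∧
          ∃ b' : P.X (n + 2) ⟶ P'.X (n + 2),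
            b' ≫ P'.d (n + 2) (n + 1) = P.d (n + 2) (n + 1) ≫ b := by
      rintro n a ⟨b0, hb0⟩
      have hG : (P.d (n + 2) (n + 1) ≫ b0) ≫ P'.d (n + 1) n = 0 := by
        rw [Category.assoc, hb0, ← Category.assoc, HomologicalComplex.d_comp_d, zero_comp]
      have hGd : ∃ w : P.X (n + 3) ⟶ P'.X (n + 2),
          P.d (n + 3) (n + 2) ≫ P.d (n + 2) (n + 1) ≫ b0 = w ≫ P'.d (n + 2) (n + 1) :=
        ⟨0, by rw [← Category.assoc, HomologicalComplex.d_comp_d, zero_comp, zero_comp]⟩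
      obtain ⟨c, b', hc, hb'⟩ := lemE (n + 1) n (P.d (n + 2) (n + 1) ≫ b0) hG hGd
      refine ⟨b0 - c, ?_, ⟨b', ?_⟩⟩
      · rw [Preadditive.sub_comp, hb0, hc, sub_zero]
      · rw [hb', Preadditive.comp_sub]
    choose stepb hyp using step
    let T : ∀ n : ℕ, Σ' a : P.X n ⟶ P'.X n,
        ∃ b : P.X (n + 1) ⟶ P'.X (n + 1), b ≫ P'.d (n + 1) n = P.d (n + 1) n ≫ a :=
      fun n => Nat.rec ⟨a0, hl0⟩ (fun k ih => ⟨stepb k ih.1 ih.2, (hyp k ih.1 ih.2).2⟩) n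
    refine ⟨{ f := fun n => (T n).1, comm' := ?_ }, ?_⟩
    · intro i j hij
      have hij' : j + 1 = i := by simpa using hij
      subst hij'
      exact (hyp j (T j).1 (T j).2).1
    · exact ha0
  · -- uniqueness up to homotopy
    intro φ₁ φ₂ hφ₁ hφ₂
    haveI := hproj 0
    have hψ : ∀ i j : ℕ, (φ₁.f i - φ₂.f i) ≫ P'.d i j = P.d i j ≫ (φ₁.f j - φ₂.f j) := by
      intro i j
      rw [Preadditive.sub_comp, Preadditive.comp_sub, φ₁.comm, φ₂.comm]
    have hz0 : (φ₁.f 0 - φ₂.f 0) ≫ ε' = 0 := by rw [Preadditive.sub_comp, hφ₁, hφ₂, sub_self]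
    obtain ⟨s', hs'⟩ : ∃ s' : P.X 0 ⟶ P'.X 1, s' ≫ P'.d 1 0 = φ₁.f 0 - φ₂.f 0 :=
      ⟨hε'_exact.liftFromProjective _ hz0, hε'_exact.liftFromProjective_comp _ hz0⟩
    have hG0 : ((φ₁.f 1 - φ₂.f 1) - P.d 1 0 ≫ s') ≫ P'.d 1 0 = 0 := by
      rw [Preadditive.sub_comp, Category.assoc, hs', hψ 1 0, sub_self]
    have hGd0 : ∃ w : P.X 2 ⟶ P'.X 2,
        P.d 2 1 ≫ ((φ₁.f 1 - φ₂.f 1) - P.d 1 0 ≫ s') = w ≫ P'.d 2 1 := by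
      refine ⟨φ₁.f 2 - φ₂.f 2, ?_⟩
      rw [Preadditive.comp_sub, ← Category.assoc, HomologicalComplex.d_comp_d, zero_comp, sub_zero,
        ← hψ 2 1]
    obtain ⟨c0, b0, hc0, hb0⟩ := lemE 0 0 _ hG0 hGd0
    have hbase1 : (s' + c0) ≫ P'.d 1 0 = φ₁.f 0 - φ₂.f 0 := by
      rw [Preadditive.add_comp, hs', hc0, add_zero]
    have hbase2 : ∃ t : P.X 1 ⟶ P'.X 2,
        t ≫ P'.d 2 1 = (φ₁.f 1 - φ₂.f 1) - P.d 1 0 ≫ (s' + c0) := by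
      refine ⟨b0, ?_⟩
      rw [hb0, Preadditive.comp_add]
      abel
    have step : ∀ (n : ℕ) (s : P.X n ⟶ P'.X (n + 1)),
        (∃ t : P.X (n + 1) ⟶ P'.X (n + 2),
          t ≫ P'.d (n + 2) (n + 1) = (φ₁.f (n + 1) - φ₂.f (n + 1)) - P.d (n + 1) n ≫ s) →
        ∃ t : P.X (n + 1) ⟶ P'.X (n + 2),
          (t ≫ P'.d (n + 2) (n + 1) = (φ₁.f (n + 1) - φ₂.f (n + 1)) - P.d (n + 1) n ≫ s) ∧
          ∃ t' : P.X (n + 2) ⟶ P'.X (n + 3),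
            t' ≫ P'.d (n + 3) (n + 2) =
              (φ₁.f (n + 2) - φ₂.f (n + 2)) - P.d (n + 2) (n + 1) ≫ t := by
      rintro n s ⟨t0, ht0⟩
      have hG : ((φ₁.f (n + 2) - φ₂.f (n + 2)) - P.d (n + 2) (n + 1) ≫ t0) ≫
          P'.d (n + 2) (n + 1) = 0 := by
        rw [Preadditive.sub_comp, Category.assoc, ht0, hψ (n + 2) (n + 1)]
        simp only [Preadditive.comp_sub]
        rw [← Category.assoc, HomologicalComplex.d_comp_d, zero_comp]
        abel
      have hGd : ∃ w : P.X (n + 3) ⟶ P'.X (n + 3),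
          P.d (n + 3) (n + 2) ≫ ((φ₁.f (n + 2) - φ₂.f (n + 2)) - P.d (n + 2) (n + 1) ≫ t0) =
            w ≫ P'.d (n + 3) (n + 2) := by
        refine ⟨φ₁.f (n + 3) - φ₂.f (n + 3), ?_⟩
        rw [Preadditive.comp_sub, ← Category.assoc, HomologicalComplex.d_comp_d, zero_comp, sub_zero,
          ← hψ (n + 3) (n + 2)]
      obtain ⟨c, t', hc, ht'⟩ := lemE (n + 1) (n + 1) _ hG hGd
      refine ⟨t0 + c, ?_, ⟨t', ?_⟩⟩
      · rw [Preadditive.add_comp, ht0, hc, add_zero]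
      · rw [ht', Preadditive.comp_add]
        abel
    choose stept hyp using step
    let Ts : ∀ n : ℕ, Σ' s : P.X n ⟶ P'.X (n + 1),
        ∃ t : P.X (n + 1) ⟶ P'.X (n + 2),
          t ≫ P'.d (n + 2) (n + 1) = (φ₁.f (n + 1) - φ₂.f (n + 1)) - P.d (n + 1) n ≫ s :=
      fun n => Nat.rec ⟨s' + c0, hbase2⟩ (fun k ih => ⟨stept k ih.1 ih.2, (hyp k ih.1 ih.2).2⟩) n
    have hTs0 : (Ts 0).1 ≫ P'.d 1 0 = φ₁.f 0 - φ₂.f 0 := hbase1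
    have hTsS : ∀ n, (Ts (n + 1)).1 ≫ P'.d (n + 2) (n + 1) =
        (φ₁.f (n + 1) - φ₂.f (n + 1)) - P.d (n + 1) n ≫ (Ts n).1 :=
      fun n => (hyp n (Ts n).1 (Ts n).2).1
    let homf : ∀ i j : ℕ, P.X i ⟶ P'.X j := fun i j =>
      if hij : i + 1 = j then (Ts i).1 ≫ eqToHom (congrArg P'.X hij) else 0
    have hom_eq : ∀ n : ℕ, homf n (n + 1) = (Ts n).1 := by
      intro n
      show (if hij : n + 1 = n + 1 then (Ts n).1 ≫ eqToHom (congrArg P'.X hij) else 0)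
        = (Ts n).1
      rw [dif_pos rfl, eqToHom_refl, Category.comp_id]
    refine ⟨{ hom := homf, zero := ?_, comm := ?_ }⟩
    · intro i j hnr
      refine dif_neg fun hc' => hnr ?_
      simpa using hc'
    · intro i
      rcases i with _ | n
      · rw [dNext_eq_zero _ 0 (by simp), prevD_eq _ (ComplexShape.down_mk 1 0 rfl),
          hom_eq 0, hTs0]
        abel
      · rw [dNext_eq _ (ComplexShape.down_mk (n + 1) n rfl),
          prevD_eq _ (ComplexShape.down_mk (n + 2) (n + 1) rfl),
          hom_eq n, hom_eq (n + 1), hTsS n]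
        abel
end

section
/- Let (𝒜, ℬ, θ_*, θ^*) be an Ω-system such that 𝒜 has enough projectives. Then the following are equivalent: (i) the essential image of θ^* is closed under subobjects in 𝒜, i.e., for every monomorphism A₁ → A₂ in 𝒜 with A₂ isomorphic to an object of the form θ^*(B), A₁ is also isomorphic to an object of this form; (ii) for every object M of 𝒜, the unit morphism 𝔞_M : M → θ^*θ_*(M) of the adjunction is an epimorphism. -/
open CategoryTheory CategoryTheory.Limits

/-- For an Ω-system with `𝒜` having enough projectives, the essential image of `θ^*` is
closed under subobjects in `𝒜` if and only if, for every object `M` of `𝒜`, the unit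
`𝔞_M : M ⟶ θ^*θ_*(M)` of the adjunction is an epimorphism. -/
theorem omegaSystem_closed_under_subobjects_iff_unit_epi
    {A : Type*} {B : Type*} [Category A] [Category B] [Abelian A] [Abelian B]
    [EnoughProjectives A]
    (push : A ⥤ B) (pull : B ⥤ A) [push.Additive] [pull.Additive]
    (S : OmegaSystem push pull) :
    (∀ {A₁ A₂ : A} (i : A₁ ⟶ A₂), Mono i → pull.essImage A₂ → pull.essImage A₁) ↔
    (∀ M : A, Epi (S.adj.unit.app M)) := by
  haveI := S.isIso_counit
  haveI : push.PreservesEpimorphisms := Functor.preservesEpimorphisms_of_adjunction S.adj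
  constructor
  · intro h M
    set u := S.adj.unit.app M with hu
    -- push.map u is an isomorphism
    have htri : push.map u ≫ S.adj.counit.app (push.obj M) = 𝟙 _ :=
      S.adj.left_triangle_components M
    have hpu : IsIso (push.map u) := by
      have : IsIso (push.map u ≫ S.adj.counit.app (push.obj M)) := by
        rw [htri]; infer_instance
      exact IsIso.of_isIso_comp_right (push.map u) (S.adj.counit.app (push.obj M))
    -- image factorization of u
    have hfac : factorThruImage u ≫ image.ι u = u := image.fac u
    -- the image is a subobject of pull (push M), hence in the essential image
    have hIm : pull.essImage (image u) :=
      h (image.ι u) inferInstance (pull.obj_mem_essImage (push.obj M))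
    obtain ⟨Bo, ⟨e⟩⟩ := hIm
    -- push.map (image.ι u) is an isomorphism
    have hpe : Epi (push.map (factorThruImage u)) := push.map_epi _
    have hpι : IsIso (push.map (image.ι u)) := by
      have h1 : push.map (factorThruImage u) ≫ push.map (image.ι u) = push.map u := by
        rw [← push.map_comp, hfac]
      have h2 : push.map (factorThruImage u) ≫
          (push.map (image.ι u) ≫ inv (push.map u)) = 𝟙 _ := by
        rw [← Category.assoc, h1, IsIso.hom_inv_id]
      haveI hmono : Mono (push.map (factorThruImage u)) := mono_of_mono_fac h2
      haveI : IsIso (push.map (factorThruImage u)) := isIso_of_mono_of_epi _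
      have h3 : push.map (image.ι u) = inv (push.map (factorThruImage u)) ≫ push.map u := by
        rw [IsIso.eq_inv_comp, h1]
      rw [h3]
      infer_instance
    -- express `e.hom ≫ image.ι u` as `pull.map n`
    let FF := S.adj.fullyFaithfulROfIsIsoCounit
    set n : Bo ⟶ push.obj M := FF.preimage (e.hom ≫ image.ι u) with hn
    have hmapn : pull.map n = e.hom ≫ image.ι u := FF.map_preimage _
    have hpn : IsIso (push.map (pull.map n)) := by
      rw [hmapn, push.map_comp]
      infer_instance
    have hn_iso : IsIso n := by
      have hnat := S.adj.counit.naturality n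
      have h3 : IsIso (S.adj.counit.app Bo ≫ n) := by
        rw [show S.adj.counit.app Bo ≫ n
            = push.map (pull.map n) ≫ S.adj.counit.app (push.obj M) from by set_option linter.unnecessarySimpa false in
          simpa using hnat.symm]
        infer_instance
      exact IsIso.of_isIso_comp_left (S.adj.counit.app Bo) n
    have hι : IsIso (image.ι u) := by
      have : image.ι u = e.inv ≫ pull.map n := by rw [hmapn]; simp
      rw [this]
      infer_instance
    -- u = epi ≫ iso, hence epi
    rw [← hfac]
    exact epi_comp _ _
  · intro h A₁ A₂ i hi hA₂
    obtain ⟨Bo, ⟨e⟩⟩ := hA₂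
    have hmono : Mono (i ≫ e.inv) := mono_comp _ _
    -- factor i ≫ e.inv through the unit
    have hfac := (S.adj.homEquiv A₁ Bo).apply_symm_apply (i ≫ e.inv)
    rw [Adjunction.homEquiv_unit] at hfac
    have hunit_mono : Mono (S.adj.unit.app A₁) := by
      rw [← hfac] at hmono
      exact mono_of_mono _ (pull.map ((S.adj.homEquiv A₁ Bo).symm (i ≫ e.inv)))
    haveI := h A₁
    have : IsIso (S.adj.unit.app A₁) := isIso_of_mono_of_epi _
    exact ⟨push.obj A₁, ⟨(asIso (S.adj.unit.app A₁)).symm⟩⟩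
end

section
/- Let (𝒜, ℬ, θ_*, θ^*) be an Ω-system such that 𝒜 has enough projectives, and assume that for every object M of 𝒜 the unit morphism M → θ^*θ_*(M) is an epimorphism. Then the essential image of θ^* is closed under extensions in 𝒜 (for every short exact sequence 0 → M' → M → M'' → 0 in 𝒜 with M' and M'' isomorphic to objects in the essential image of θ^*, M is also isomorphic to an object in the essential image) if and only if (L₁θ_*)(θ^*(N)) = 0 for every object N of ℬ, where L₁θ_* denotes the first left derived functor of θ_*. -/
open CategoryTheory CategoryTheory.Limits

namespace OmegaAux



variable {A : Type*} {B : Type*} [Category A] [Category B] [Abelian A] [Abelian B]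

section Resolution

variable [EnoughProjectives A]

/-- Auxiliary complex: a projective resolution built on top of a chosen epimorphism
`p : P ⟶ M` from a projective object. -/
noncomputable def ofComplex'Succ {X₀ X₁ : A} (f : X₁ ⟶ X₀) :
    Σ' (X₂ : A) (d : X₂ ⟶ X₁), d ≫ f = 0 :=
  ⟨_, Projective.d f, by
    have h : Projective.d f ≫ f = 0 := (Category.assoc (Projective.π (kernel f)) (kernel.ι f) f).trans
      (by rw [kernel.condition, comp_zero]; rfl)
    exact h⟩

noncomputable def ofComplex' {P M : A} (p : P ⟶ M) [Projective P] : ChainComplex A ℕ :=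
  ChainComplex.mk' P (Projective.syzygies p) (Projective.d p)
    (fun f => ofComplex'Succ f)

lemma ofComplex'_d_1_0 {P M : A} (p : P ⟶ M) [Projective P] :
    (ofComplex' p).d 1 0 = Projective.d p := by
  simp [ofComplex']

lemma ofComplex'_exactAt_succ {P M : A} (p : P ⟶ M) [Projective P] (n : ℕ) :
    (ofComplex' p).ExactAt (n + 1) := by
  rw [HomologicalComplex.exactAt_iff' _ (n + 1 + 1) (n + 1) n (by simp) (by simp)]
  refine (ShortComplex.exact_iff_of_iso ?_).1 (CategoryTheory.exact_d_f ((ofComplex' p).d (n + 1) n))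
  refine ShortComplex.isoMk (ChainComplex.mk'XIso P (Projective.syzygies p) (Projective.d p)
    (fun f => ofComplex'Succ f) n).symm (Iso.refl _) (Iso.refl _) ?_ ?_
  · exact ((Iso.inv_comp_eq _).2 (ChainComplex.mk'_d P (Projective.syzygies p) (Projective.d p)
      (fun f => ofComplex'Succ f) n)).trans (Category.comp_id (Projective.d ((ofComplex' p).d (n + 1) n))).symm
  · exact (Category.id_comp _).trans (Category.comp_id _).symm

instance ofComplex'_projective {P M : A} (p : P ⟶ M) [Projective P] (n : ℕ) :
    Projective ((ofComplex' p).X n) := by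
  obtain (_ | _ | _ | n) := n
  · exact (inferInstance : Projective P)
  all_goals apply Projective.projective_over

/-- A projective resolution of `M` whose degree-zero part is a chosen epimorphism
`p : P ⟶ M` with `P` projective. -/
noncomputable def resolutionOfEpi {P M : A} (p : P ⟶ M) [Projective P] [Epi p] :
    ProjectiveResolution M where
  complex := ofComplex' p
  π := (ChainComplex.toSingle₀Equiv _ _).symm ⟨p, by
        rw [ofComplex'_d_1_0]; exact (Category.assoc (Projective.π (kernel p)) (kernel.ι p) p).trans (by rw [kernel.condition, comp_zero]; rfl)⟩
  quasiIso := ⟨fun n => by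
    cases n with
    | zero =>
      rw [ChainComplex.quasiIsoAt₀_iff, ShortComplex.quasiIso_iff_of_zeros']
      · refine (ShortComplex.exact_and_epi_g_iff_of_iso ?_).2
          ⟨CategoryTheory.exact_d_f p, by dsimp; infer_instance⟩
        exact ShortComplex.isoMk (Iso.refl _) (Iso.refl _) (Iso.refl _)
          (by exact (Category.id_comp _).trans ((ofComplex'_d_1_0 p).symm.trans (Category.comp_id _).symm))
            (by exact (Category.id_comp p).trans ((ChainComplex.toSingle₀Equiv_symm_apply_f_zero
              (C := ofComplex' p) (X := M) p _).symm.trans (Category.comp_id _).symm))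
      all_goals rfl
    | succ n =>
      rw [quasiIsoAt_iff_exactAt']
      · apply ofComplex'_exactAt_succ
      · apply ChainComplex.exactAt_succ_single_obj⟩

lemma resolutionOfEpi_complex_d_1_0 {P M : A} (p : P ⟶ M) [Projective P] [Epi p] :
    (resolutionOfEpi p).complex.d 1 0 = Projective.d p :=
  ofComplex'_d_1_0 p


lemma isZero_leftDerived_one_iff (F : A ⥤ B) [F.Additive] [F.PreservesEpimorphisms]
    [PreservesFiniteColimits F] {P M : A} [Projective P] (p : P ⟶ M) [Epi p] :
    IsZero ((F.leftDerived 1).obj M) ↔ Mono (F.map (kernel.ι p)) := by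
  let Q : ProjectiveResolution M := resolutionOfEpi p
  let C := (F.mapHomologicalComplex (ComplexShape.down ℕ)).obj Q.complex
  have e : (F.leftDerived 1).obj M ≅ C.homology 1 := Q.isoLeftDerivedObj F 1
  have h1 : IsZero ((F.leftDerived 1).obj M) ↔ C.ExactAt 1 := by
    rw [HomologicalComplex.exactAt_iff_isZero_homology]
    exact ⟨fun h => h.of_iso e.symm, fun h => h.of_iso e⟩
  rw [h1, C.exactAt_iff' 2 1 0 (by simp) (by simp)]
  -- basic morphisms
  have hd1 : Q.complex.d 1 0 = Projective.d p := ofComplex'_d_1_0 p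
  have hdd : Q.complex.d 2 1 ≫ Q.complex.d 1 0 = 0 := Q.complex.d_comp_d 2 1 0
  let q : Q.complex.X 1 ⟶ kernel p := Projective.π (kernel p)
  have hq : q ≫ kernel.ι p = Q.complex.d 1 0 := hd1.symm
  have hzero : Q.complex.d 2 1 ≫ q = 0 := by
    rw [← cancel_mono (kernel.ι p), Category.assoc, hq, zero_comp]
    exact hdd
  -- exactness of the short complex (d₂, q) in A
  have hA : (ShortComplex.mk (Q.complex.d 2 1) (Q.complex.d 1 0) hdd).Exact := by
    have h := ofComplex'_exactAt_succ p 0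
    rw [HomologicalComplex.exactAt_iff' _ 2 1 0 (by simp) (by simp)] at h
    refine (ShortComplex.exact_iff_of_iso ?_).1 h
    exact ShortComplex.isoMk (Iso.refl _) (Iso.refl _) (Iso.refl _) (by exact (Category.id_comp _).trans (Category.comp_id _).symm)
      (by exact (Category.id_comp _).trans (Category.comp_id _).symm)
  have hSq : (ShortComplex.mk (Q.complex.d 2 1) q hzero).Exact := by
    let φ : ShortComplex.mk (Q.complex.d 2 1) q hzero ⟶
        ShortComplex.mk (Q.complex.d 2 1) (Q.complex.d 1 0) hdd :=
      { τ₁ := 𝟙 _, τ₂ := 𝟙 _, τ₃ := kernel.ι p,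
        comm₁₂ := by simp, comm₂₃ := by exact (Category.id_comp _).trans hq.symm }
    haveI : Epi φ.τ₁ := by dsimp [φ]; infer_instance
    haveI : IsIso φ.τ₂ := by dsimp [φ]; infer_instance
    haveI : Mono φ.τ₃ := (inferInstance : Mono (kernel.ι p))
    rw [ShortComplex.exact_iff_of_epi_of_isIso_of_mono φ]
    exact hA
  haveI : Epi q := (inferInstance : Epi (Projective.π (kernel p)))
  have hSqF : ((ShortComplex.mk (Q.complex.d 2 1) q hzero).map F).Exact :=
    hSq.map_of_epi_of_preservesCokernel F inferInstance inferInstance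
  -- identify the target short complex
  have e2 : C.sc' 2 1 0 ≅ ShortComplex.mk (F.map (Q.complex.d 2 1)) (F.map (Q.complex.d 1 0))
      (by rw [← F.map_comp, hdd, F.map_zero]) :=
    ShortComplex.isoMk (Iso.refl _) (Iso.refl _) (Iso.refl _) (by exact (Category.id_comp _).trans (Category.comp_id _).symm)
      (by exact (Category.id_comp _).trans (Category.comp_id _).symm)
  rw [ShortComplex.exact_iff_of_iso e2]
  constructor
  · -- exactness implies mono
    intro hex
    apply Preadditive.mono_of_cancel_zero
    intro T t ht
    obtain ⟨T', π₁, hπ₁, u, hu⟩ := surjective_up_to_refinements_of_epi (F.map q) t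
    have hu2 : u ≫ F.map (Q.complex.d 1 0) = 0 := by
      refine (congrArg (fun x => u ≫ F.map x) hq.symm).trans ?_
      refine (congrArg (fun x => u ≫ x) (F.map_comp q (kernel.ι p))).trans ?_
      rw [← Category.assoc, ← hu, Category.assoc, ht, comp_zero]
      rfl
    obtain ⟨T'', π₂, hπ₂, w, hw⟩ := hex.exact_up_to_refinements u hu2
    dsimp at hw
    have : π₂ ≫ π₁ ≫ t = 0 := by
      rw [hu, ← Category.assoc, hw, Category.assoc, ← F.map_comp, hzero, F.map_zero, comp_zero]
    rw [← cancel_epi π₁, ← cancel_epi π₂, comp_zero, comp_zero]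
    exact this
  · -- mono implies exactness
    intro hmono
    let φ' : (ShortComplex.mk (Q.complex.d 2 1) q hzero).map F ⟶
        ShortComplex.mk (F.map (Q.complex.d 2 1)) (F.map (Q.complex.d 1 0))
          (by rw [← F.map_comp, hdd, F.map_zero]) :=
      { τ₁ := 𝟙 _, τ₂ := 𝟙 _, τ₃ := F.map (kernel.ι p),
        comm₁₂ := by exact (Category.id_comp _).trans (Category.comp_id _).symm, comm₂₃ := by
          exact (Category.id_comp _).trans ((congrArg F.map hq).symm.trans (F.map_comp _ _)) }
    haveI : Epi φ'.τ₁ := (inferInstance : Epi (𝟙 (F.obj (Q.complex.X 2))))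
    haveI : IsIso φ'.τ₂ := (inferInstance : IsIso (𝟙 (F.obj (Q.complex.X 1))))
    haveI : Mono φ'.τ₃ := hmono
    rw [← ShortComplex.exact_iff_of_epi_of_isIso_of_mono φ']
    exact hSqF


lemma mono_map_f_of_isZero (F : A ⥤ B) [F.Additive] [F.PreservesEpimorphisms]
    [PreservesFiniteColimits F] (E : ShortComplex A) (hE : E.ShortExact)
    (h : IsZero ((F.leftDerived 1).obj E.X₃)) : Mono (F.map E.f) := by
  haveI := hE.mono_f
  haveI := hE.epi_g
  set P := Projective.over E.X₂ with hP
  set π : P ⟶ E.X₂ := Projective.π E.X₂ with hπdef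
  set p : P ⟶ E.X₃ := π ≫ E.g with hpdef
  haveI : Epi p := epi_comp _ _
  have hmono : Mono (F.map (kernel.ι p)) := (isZero_leftDerived_one_iff F p).1 h
  have hr0 : (kernel.ι p ≫ π) ≫ E.g = 0 := by
    rw [Category.assoc, ← hpdef]
    exact kernel.condition p
  let r : kernel p ⟶ E.X₁ := hE.exact.lift (kernel.ι p ≫ π) hr0
  have hrf : r ≫ E.f = kernel.ι p ≫ π := hE.exact.lift_f _ _
  have hrepi : Epi r := by
    rw [epi_iff_surjective_up_to_refinements]
    intro T y
    obtain ⟨T', π₁, hπ₁, z, hz⟩ := surjective_up_to_refinements_of_epi π (y ≫ E.f)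
    have hz2 : z ≫ p = 0 := by
      rw [hpdef, ← Category.assoc, ← hz, Category.assoc, Category.assoc, E.zero, comp_zero,
        comp_zero]
    refine ⟨T', π₁, hπ₁, kernel.lift p z hz2, ?_⟩
    rw [← cancel_mono E.f, Category.assoc (kernel.lift p z hz2) r E.f, hrf, ← Category.assoc,
      kernel.lift_ι, Category.assoc, hz]
  -- the short exact sequence 0 → kernel π → P → E.X₂ → 0 mapped by F is exact
  have hexπ : (ShortComplex.mk (kernel.ι π) π (kernel.condition π)).Exact :=
    ShortComplex.exact_of_f_is_kernel _ (kernelIsKernel π)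
  haveI : Epi (ShortComplex.mk (kernel.ι π) π (kernel.condition π)).g := by
    dsimp; infer_instance
  have hexπF : ((ShortComplex.mk (kernel.ι π) π (kernel.condition π)).map F).Exact :=
    hexπ.map_of_epi_of_preservesCokernel F inferInstance inferInstance
  -- j : kernel π ⟶ kernel p
  have hj0 : kernel.ι π ≫ p = 0 := by
    rw [hpdef, ← Category.assoc, kernel.condition, zero_comp]
  let j : kernel π ⟶ kernel p := kernel.lift p (kernel.ι π) hj0
  have hj : j ≫ kernel.ι p = kernel.ι π := kernel.lift_ι _ _ _
  have hjr : j ≫ r = 0 := by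
    rw [← cancel_mono E.f, Category.assoc, hrf, ← Category.assoc, hj, kernel.condition,
      zero_comp]
  -- final chase
  apply Preadditive.mono_of_cancel_zero
  intro T t ht
  obtain ⟨T', π₁, hπ₁, u, hu⟩ := surjective_up_to_refinements_of_epi (F.map r) t
  have hv : (u ≫ F.map (kernel.ι p)) ≫ F.map π = 0 := by
    rw [Category.assoc, ← F.map_comp, ← hrf, F.map_comp, ← Category.assoc, ← hu,
      Category.assoc, ht, comp_zero]
  obtain ⟨T'', π₂, hπ₂, w, hw⟩ := hexπF.exact_up_to_refinements (u ≫ F.map (kernel.ι p))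
    (by exact hv)
  dsimp at hw
  have hw'' : π₂ ≫ u = w ≫ F.map j := by
    rw [← cancel_mono (F.map (kernel.ι p)), Category.assoc]
    refine Eq.trans ?_ (Category.assoc w (F.map j) (F.map (kernel.ι p))).symm
    refine Eq.trans ?_ (congrArg (w ≫ ·) (F.map_comp j (kernel.ι p)))
    rw [hj]
    exact hw
  have : π₂ ≫ π₁ ≫ t = 0 := by
    rw [hu, ← Category.assoc, hw'']
    refine (Category.assoc w (F.map j) (F.map r)).trans ?_
    refine (congrArg (w ≫ ·) (F.map_comp j r)).symm.trans ?_
    rw [hjr, F.map_zero]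
    exact comp_zero
  rw [← cancel_epi π₁, ← cancel_epi π₂, comp_zero, comp_zero]
  exact this


end Resolution

end OmegaAux

open OmegaAux

/-- For an Ω-system with `𝒜` having enough projectives, assuming that every unit morphism
`M ⟶ θ^*θ_*(M)` is an epimorphism: the essential image of `θ^*` is closed under extensions
in `𝒜` if and only if `(L₁θ_*)(θ^*(N)) = 0` for every object `N` of `ℬ`. -/
theorem omegaSystem_closed_under_extensions_iff_L1_vanishes
    {A : Type*} {B : Type*} [Category A] [Category B] [Abelian A] [Abelian B]
    [EnoughProjectives A]
    (push : A ⥤ B) (pull : B ⥤ A) [push.Additive] [pull.Additive]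
    (S : OmegaSystem push pull)
    (hunit : ∀ M : A, Epi (S.adj.unit.app M)) :
    (∀ E : ShortComplex A, E.ShortExact →
      pull.essImage E.X₁ → pull.essImage E.X₃ → pull.essImage E.X₂) ↔
    (∀ N : B, IsZero ((push.leftDerived 1).obj (pull.obj N))) := by
  obtain ⟨adj, hcounit, hpullepi⟩ := S
  dsimp at hunit ⊢
  haveI : IsIso adj.counit := hcounit
  haveI hlc := adj.leftAdjoint_preservesColimits
  haveI hrl := adj.rightAdjoint_preservesLimits
  haveI : PreservesFiniteColimits push := ⟨fun _ _ _ => inferInstance⟩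
  haveI : PreservesFiniteLimits pull := ⟨fun _ _ _ => inferInstance⟩
  haveI : push.PreservesEpimorphisms := by
    constructor
    intro X Y f hf
    exact push.map_epi f
  haveI : pull.PreservesMonomorphisms := by
    constructor
    intro X Y f hf
    exact pull.map_mono f
  have hff : pull.FullyFaithful := adj.fullyFaithfulROfIsIsoCounit
  haveI : pull.Full := hff.full
  haveI : pull.Faithful := hff.faithful
  -- the unit is an isomorphism on the essential image of `pull`
  have unit_iso : ∀ {X : A}, pull.essImage X → IsIso (adj.unit.app X) := by
    intro X hX
    obtain ⟨N, ⟨e⟩⟩ := hX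
    haveI : IsIso (adj.unit.app (pull.obj N)) := by
      have h := adj.right_triangle_components N
      haveI : IsIso (adj.unit.app (pull.obj N) ≫ pull.map (adj.counit.app N)) := by
        rw [h]; exact IsIso.id _
      exact IsIso.of_isIso_comp_right _ (pull.map (adj.counit.app N))
    have hnat : adj.unit.app (pull.obj N) ≫ (push ⋙ pull).map e.hom =
        e.hom ≫ adj.unit.app X := (adj.unit.naturality e.hom).symm
    have : adj.unit.app X = e.inv ≫ adj.unit.app (pull.obj N) ≫ (push ⋙ pull).map e.hom := by
      rw [hnat, Iso.inv_hom_id_assoc]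
    rw [this]
    infer_instance
  constructor
  · -- closure under extensions implies vanishing
    intro hclosed N
    set M := pull.obj N with hM
    set P := Projective.over M with hPdef
    set p : P ⟶ M := Projective.π M with hpdef
    rw [isZero_leftDerived_one_iff push p]
    set K := kernel p with hK
    set ι : K ⟶ P := kernel.ι p with hι
    set uK : K ⟶ pull.obj (push.obj K) := adj.unit.app K with huK
    haveI : Epi uK := hunit K
    set Q := pushout uK ι with hQ
    have hc0 : uK ≫ 0 = ι ≫ p := by rw [comp_zero, hι, kernel.condition]
    set c : Q ⟶ M := pushout.desc 0 p hc0 with hc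
    have hzero : pushout.inl uK ι ≫ c = 0 := by rw [hc, pushout.inl_desc]
    haveI : Mono (pushout.inl uK ι) := inferInstance
    haveI : Epi c := by
      have : pushout.inr uK ι ≫ c = p := by rw [hc, pushout.inr_desc]
      exact epi_of_epi_fac this
    have hexQ : (ShortComplex.mk (pushout.inl uK ι) c hzero).Exact := by
      rw [ShortComplex.exact_iff_exact_up_to_refinements]
      intro T x₂ hx₂
      dsimp at x₂ hx₂ ⊢
      obtain ⟨T', π₁, hπ₁, z, hz⟩ := surjective_up_to_refinements_of_epi (pushout.inr uK ι) x₂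
      have hzp : z ≫ p = 0 := by
        have : z ≫ pushout.inr uK ι ≫ c = z ≫ p := by rw [hc, pushout.inr_desc]
        rw [← this, ← Category.assoc, ← hz, Category.assoc, hx₂, comp_zero]
      have hEstd : (ShortComplex.mk ι p (kernel.condition p)).Exact :=
        ShortComplex.exact_of_f_is_kernel _ (kernelIsKernel p)
      haveI : Mono (ShortComplex.mk ι p (kernel.condition p)).f := by dsimp; rw [hι]; infer_instance
      let s : T' ⟶ K := hEstd.lift z hzp
      have hs : s ≫ ι = z := hEstd.lift_f z hzp
      refine ⟨T', π₁, hπ₁, s ≫ uK, ?_⟩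
      rw [hz, ← hs, Category.assoc, Category.assoc, pushout.condition]
    have hSE : (ShortComplex.mk (pushout.inl uK ι) c hzero).ShortExact :=
      { exact := hexQ }
    obtain ⟨L, ⟨eQ⟩⟩ := hclosed _ hSE ⟨push.obj K, ⟨Iso.refl _⟩⟩ ⟨N, ⟨Iso.refl _⟩⟩
    -- eQ : pull.obj L ≅ Q
    set m : push.obj K ⟶ L := pull.preimage (pushout.inl uK ι ≫ eQ.inv) with hm
    have hmmap : pull.map m = pushout.inl uK ι ≫ eQ.inv := pull.map_preimage _
    haveI : Mono (pull.map m) := by rw [hmmap]; exact mono_comp _ _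
    haveI : Mono m := pull.mono_of_mono_map inferInstance
    have hnat : push.map (pull.map m) ≫ adj.counit.app L =
        adj.counit.app (push.obj K) ≫ m := adj.counit.naturality m
    haveI : Mono (push.map (pull.map m)) := by
      have : push.map (pull.map m) =
          adj.counit.app (push.obj K) ≫ m ≫ inv (adj.counit.app L) := by
        rw [← Category.assoc, ← hnat, Category.assoc, IsIso.hom_inv_id, Category.comp_id]
      rw [this]
      exact mono_comp _ _
    have hinl : pushout.inl uK ι = pull.map m ≫ eQ.hom := by
      rw [hmmap, Category.assoc, Iso.inv_hom_id, Category.comp_id]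
    haveI hmonoinl : Mono (push.map (pushout.inl uK ι)) := by
      rw [hinl, push.map_comp]
      exact mono_comp _ _
    haveI : IsIso (push.map uK) := by
      have h := adj.left_triangle_components K
      haveI : IsIso (push.map (adj.unit.app K) ≫ adj.counit.app (push.obj K)) := by
        rw [h]; exact IsIso.id _
      exact IsIso.of_isIso_comp_right _ (adj.counit.app (push.obj K))
    have hcomm : push.map ι ≫ push.map (pushout.inr uK ι) =
        push.map uK ≫ push.map (pushout.inl uK ι) := by
      rw [← push.map_comp, ← push.map_comp, pushout.condition]
    haveI : Mono (push.map ι ≫ push.map (pushout.inr uK ι)) := by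
      rw [hcomm]; exact mono_comp _ _
    exact mono_of_mono (push.map ι) (push.map (pushout.inr uK ι))
  · -- vanishing implies closure under extensions
    intro hvan E hE h1 h3
    haveI := hE.mono_f
    haveI := hE.epi_g
    have h3' := h3
    obtain ⟨N₃, ⟨e₃⟩⟩ := h3'
    have hz : IsZero ((push.leftDerived 1).obj E.X₃) :=
      (hvan N₃).of_iso ((push.leftDerived 1).mapIso e₃).symm
    have hmonoF : Mono (push.map E.f) := mono_map_f_of_isZero push E hE hz
    haveI : Epi ((E.map push).map pull).g := by
      exact hpullepi _ (push.map_epi E.g)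
    haveI : Mono ((E.map push).map pull).f := by
      exact pull.map_mono (push.map E.f)
    haveI : Mono (E.map push).f := by exact hmonoF
    haveI : Epi (E.map push).g := by exact (inferInstance : Epi (push.map E.g))
    have hpushexact : (E.map push).Exact :=
      hE.exact.map_of_epi_of_preservesCokernel push inferInstance inferInstance
    have hexact'' : ((E.map push).map pull).Exact :=
      hpushexact.map_of_mono_of_preservesKernel pull inferInstance inferInstance
    -- the unit maps
    haveI hu1 : IsIso (adj.unit.app E.X₁) := unit_iso h1
    haveI hu3 : IsIso (adj.unit.app E.X₃) := unit_iso h3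
    have hmono2 : Mono (adj.unit.app E.X₂) := by
      apply Preadditive.mono_of_cancel_zero
      intro T t ht
      have h3' : (t ≫ E.g) ≫ adj.unit.app E.X₃ = 0 := by
        have hn : E.g ≫ adj.unit.app E.X₃ =
            adj.unit.app E.X₂ ≫ (push ⋙ pull).map E.g := (adj.unit.naturality E.g)
        rw [Category.assoc, hn, ← Category.assoc, ht, zero_comp]
      have hg0 : t ≫ E.g = 0 := zero_of_comp_mono _ h3'
      set s := hE.exact.lift t hg0 with hs
      have hsf : s ≫ E.f = t := hE.exact.lift_f t hg0
      have hs1 : (s ≫ adj.unit.app E.X₁) ≫ (push ⋙ pull).map E.f = 0 := by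
        have hn : E.f ≫ adj.unit.app E.X₂ =
            adj.unit.app E.X₁ ≫ (push ⋙ pull).map E.f := (adj.unit.naturality E.f)
        rw [Category.assoc, ← hn, ← Category.assoc, hsf, ht]
      have hs0 : s ≫ adj.unit.app E.X₁ = 0 := by
        haveI : Mono ((push ⋙ pull).map E.f) := by
          dsimp
          exact pull.map_mono _
        exact zero_of_comp_mono _ hs1
      have : s = 0 := by
        haveI : Mono (adj.unit.app E.X₁) := inferInstance
        exact zero_of_comp_mono _ hs0
      rw [← hsf, this, zero_comp]
    haveI : Epi (adj.unit.app E.X₂) := hunit E.X₂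
    haveI : Mono (adj.unit.app E.X₂) := hmono2
    haveI : IsIso (adj.unit.app E.X₂) := isIso_of_mono_of_epi _
    exact ⟨push.obj E.X₂, ⟨(asIso (adj.unit.app E.X₂)).symm⟩⟩
end

section
/- Let (𝒜, ℬ, θ_*, θ^*) be an Ω-system such that 𝒜 has enough projectives. If 0 → M' → M → M'' → 0 is a short exact sequence in 𝒜 such that M' and M'' are isomorphic to objects in the essential image of θ^* but M is not isomorphic to any object in the essential image of θ^*, then (L₁θ_*)(M'') ≠ 0, where L₁θ_* denotes the first left derived functor of θ_*. -/
open CategoryTheory CategoryTheory.Limits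

namespace OmegaAux

variable {A : Type*} {B : Type*} [Category A] [Category B] [Abelian A] [Abelian B]

/-- If `d ≫ g = 0` is exact, `g = e ≫ ι` with `e` epi and `d ≫ e = 0`, then `ι` is mono. -/
lemma mono_aux {Z₂ Z₁ K₀ Z₀ : B} (d : Z₂ ⟶ Z₁) (g : Z₁ ⟶ Z₀) (e : Z₁ ⟶ K₀) (ι : K₀ ⟶ Z₀)
    (w : d ≫ g = 0) (hx : (ShortComplex.mk d g w).Exact) (hge : e ≫ ι = g)
    [Epi e] (hde : d ≫ e = 0) : Mono ι := by
  apply Preadditive.mono_of_cancel_zero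
  intro Z t ht
  obtain ⟨Z', π, hπ, y, hy⟩ := surjective_up_to_refinements_of_epi e t
  have hyg : y ≫ g = 0 := by
    rw [← hge, ← Category.assoc, ← hy, Category.assoc, ht, comp_zero]
  obtain ⟨Z'', π', hπ', z, hz⟩ := hx.exact_up_to_refinements y hyg
  have : π' ≫ π ≫ t = 0 := by
    rw [hy, ← Category.assoc, hz, Category.assoc, hde, comp_zero]
  exact zero_of_epi_comp π (zero_of_epi_comp π' this)

/-- The "butterfly" short complex `K → X₁ ⊞ Q₀ → X₂` associated to a comparison of a
projective presentation with a short exact sequence is exact with epimorphic second map. -/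
lemma butterfly (E : ShortComplex A) (hE : E.ShortExact) {Q₀ : A} (π₀ : Q₀ ⟶ E.X₃) [Epi π₀]
    (β : Q₀ ⟶ E.X₂) (hβ : β ≫ E.g = π₀) (α : kernel π₀ ⟶ E.X₁)
    (hα : α ≫ E.f = kernel.ι π₀ ≫ β)
    (w0 : biprod.lift α (-(kernel.ι π₀)) ≫ biprod.desc E.f β = 0) :
    (ShortComplex.mk (biprod.lift α (-(kernel.ι π₀))) (biprod.desc E.f β) w0).Exact
      ∧ Epi (biprod.desc E.f β) := by
  have hm := hE.mono_f
  constructor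
  · rw [ShortComplex.exact_iff_exact_up_to_refinements]
    intro R z hz
    have hdesc : biprod.desc E.f β = biprod.fst ≫ E.f + biprod.snd ≫ β := by
      apply biprod.hom_ext' <;> simp
    have hzd : (z ≫ biprod.fst) ≫ E.f + (z ≫ biprod.snd) ≫ β = 0 := by
      calc (z ≫ biprod.fst) ≫ E.f + (z ≫ biprod.snd) ≫ β
          = z ≫ (biprod.fst ≫ E.f + biprod.snd ≫ β) := by
            rw [Preadditive.comp_add, Category.assoc, Category.assoc]
        _ = 0 := by rw [← hdesc, hz]
    have hbπ : (z ≫ biprod.snd) ≫ π₀ = 0 := by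
      have h1 : ((z ≫ biprod.fst) ≫ E.f + (z ≫ biprod.snd) ≫ β) ≫ E.g = 0 := by
        rw [hzd, zero_comp]
      rw [Preadditive.add_comp, Category.assoc, E.zero, comp_zero, zero_add,
        Category.assoc, hβ] at h1
      exact h1
    have hw : kernel.lift π₀ (z ≫ biprod.snd) hbπ ≫ kernel.ι π₀ = z ≫ biprod.snd :=
      kernel.lift_ι _ _ _
    have haw : z ≫ biprod.fst + kernel.lift π₀ (z ≫ biprod.snd) hbπ ≫ α = 0 := by
      have : (z ≫ biprod.fst + kernel.lift π₀ (z ≫ biprod.snd) hbπ ≫ α) ≫ E.f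
          = 0 ≫ E.f := by
        rw [Preadditive.add_comp,
          Category.assoc (kernel.lift π₀ (z ≫ biprod.snd) hbπ) α E.f, hα,
          ← Category.assoc, hw, hzd, zero_comp]
      exact (cancel_mono E.f).1 this
    refine ⟨R, 𝟙 R, inferInstance, -(kernel.lift π₀ (z ≫ biprod.snd) hbπ), ?_⟩
    rw [Category.id_comp]
    apply biprod.hom_ext
    · rw [Category.assoc, biprod.lift_fst, Preadditive.neg_comp]
      exact (eq_neg_of_add_eq_zero_left haw)
    · rw [Category.assoc, biprod.lift_snd, Preadditive.neg_comp, Preadditive.comp_neg,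
        neg_neg, hw]
  · apply Preadditive.epi_of_cancel_zero
    intro R q hq
    have hfq : E.f ≫ q = 0 := by
      rw [← biprod.inl_desc E.f β, Category.assoc, hq, comp_zero]
    have hβq : β ≫ q = 0 := by
      rw [← biprod.inr_desc E.f β, Category.assoc, hq, comp_zero]
    obtain ⟨r, hr⟩ := CokernelCofork.IsColimit.desc' hE.gIsCokernel q hfq
    simp only [Cofork.π_ofπ] at hr
    have hπr : π₀ ≫ r = 0 := by
      rw [← hβ, Category.assoc, hr, hβq]
    have : r = 0 := zero_of_epi_comp π₀ hπr
    rw [← hr, this, comp_zero]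

/-- If a right exact functor `F` sends the inclusion of the syzygy `K = ker π₀` to a
monomorphism, then `F` sends `E.f` to a monomorphism. -/
lemma mono_map_f (F : A ⥤ B) [F.Additive] [PreservesFiniteColimits F]
    (E : ShortComplex A) (hE : E.ShortExact) {Q₀ : A} (π₀ : Q₀ ⟶ E.X₃) [Epi π₀]
    (β : Q₀ ⟶ E.X₂) (hβ : β ≫ E.g = π₀) (α : kernel π₀ ⟶ E.X₁)
    (hα : α ≫ E.f = kernel.ι π₀ ≫ β)
    (hι : Mono (F.map (kernel.ι π₀))) : Mono (F.map E.f) := by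
  have w0 : biprod.lift α (-(kernel.ι π₀)) ≫ biprod.desc E.f β = 0 := by
    rw [biprod.lift_desc, hα, Preadditive.neg_comp, add_neg_cancel]
  obtain ⟨hTex, hTepi⟩ := butterfly E hE π₀ β hβ α hα w0
  haveI : Epi (ShortComplex.mk (biprod.lift α (-(kernel.ι π₀))) (biprod.desc E.f β) w0).g :=
    hTepi
  have hTFex : ((ShortComplex.mk (biprod.lift α (-(kernel.ι π₀))) (biprod.desc E.f β) w0).map
      F).Exact :=
    hTex.map_of_epi_of_preservesCokernel F hTepi inferInstance
  apply Preadditive.mono_of_cancel_zero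
  intro Z t ht
  have hu : (t ≫ F.map biprod.inl) ≫ F.map (biprod.desc E.f β) = 0 := by
    rw [Category.assoc, ← Functor.map_comp, biprod.inl_desc, ht]
  obtain ⟨Z', π, hπ, y, hy⟩ := hTFex.exact_up_to_refinements (t ≫ F.map biprod.inl) hu
  change Z' ⟶ F.obj (kernel π₀) at y
  have hy2 : (y : Z' ⟶ F.obj (kernel π₀)) ≫ F.map (kernel.ι π₀) = 0 := by
    have l1 : (π ≫ (t ≫ F.map (biprod.inl : E.X₁ ⟶ E.X₁ ⊞ Q₀)))
        ≫ F.map (biprod.snd : E.X₁ ⊞ Q₀ ⟶ Q₀) = 0 := by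
      rw [Category.assoc, Category.assoc, ← Functor.map_comp, biprod.inl_snd,
        Functor.map_zero, comp_zero, comp_zero]
    have hy' : π ≫ t ≫ F.map (biprod.inl : E.X₁ ⟶ E.X₁ ⊞ Q₀)
        = (y : Z' ⟶ F.obj (kernel π₀)) ≫ F.map (biprod.lift α (-(kernel.ι π₀))) := hy
    rw [hy'] at l1
    rw [Category.assoc, ← Functor.map_comp, biprod.lift_snd, Functor.map_neg,
      Preadditive.comp_neg, neg_eq_zero] at l1
    exact l1
  have hy0 : y = 0 := zero_of_comp_mono (F.map (kernel.ι π₀)) hy2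
  have hy : π ≫ t ≫ F.map (biprod.inl : E.X₁ ⟶ E.X₁ ⊞ Q₀) = 0 := by
    rw [hy0] at hy
    exact hy.trans zero_comp
  have : π ≫ t = 0 := by
    have l2 : (π ≫ t ≫ F.map (biprod.inl : E.X₁ ⟶ E.X₁ ⊞ Q₀)) ≫ F.map (biprod.fst : E.X₁ ⊞ Q₀ ⟶ E.X₁)
        = 0 ≫ F.map (biprod.fst : E.X₁ ⊞ Q₀ ⟶ E.X₁) :=
      congrArg (fun v => v ≫ F.map (biprod.fst : E.X₁ ⊞ Q₀ ⟶ E.X₁)) hy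
    simp only [Category.assoc, ← Functor.map_comp, biprod.inl_fst, zero_comp] at l2
    rw [CategoryTheory.Functor.map_id, Category.comp_id] at l2
    exact l2
  exact zero_of_epi_comp π this

/-- If `(L₁F)(X) = 0` then `F` sends the inclusion of the syzygy of a projective
resolution of `X` to a monomorphism. -/
lemma mono_map_kernel_ι [HasProjectiveResolutions A] (F : A ⥤ B) [F.Additive]
    [PreservesFiniteColimits F]
    {X : A} (P : ProjectiveResolution X) (hz : IsZero ((F.leftDerived 1).obj X)) :
    Mono (F.map (kernel.ι (show P.complex.X 0 ⟶ X from P.π.f 0))) := by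
  have hzC : IsZero ((((F.mapHomologicalComplex
      (ComplexShape.down ℕ)).obj P.complex)).homology 1) :=
    hz.of_iso (P.isoLeftDerivedObj F 1).symm
  have hCex : ((F.mapHomologicalComplex (ComplexShape.down ℕ)).obj P.complex).ExactAt 1 := by
    rw [HomologicalComplex.exactAt_iff_isZero_homology]
    exact hzC
  have hsc := (HomologicalComplex.exactAt_iff' _ 2 1 0 (by simp) (by simp)).1 hCex
  haveI he : Epi (kernel.lift (show P.complex.X 0 ⟶ X from P.π.f 0) (P.complex.d 1 0)
      P.complex_d_comp_π_f_zero) :=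
    (ShortComplex.exact_iff_epi_kernel_lift _).1 P.exact₀
  haveI : Epi (F.map (kernel.lift (show P.complex.X 0 ⟶ X from P.π.f 0) (P.complex.d 1 0)
      P.complex_d_comp_π_f_zero)) := preserves_epi_of_preservesColimit F _
  have hde0 : P.complex.d 2 1 ≫ kernel.lift (show P.complex.X 0 ⟶ X from P.π.f 0)
      (P.complex.d 1 0) P.complex_d_comp_π_f_zero = 0 := by
    rw [← cancel_mono (kernel.ι (show P.complex.X 0 ⟶ X from P.π.f 0)), Category.assoc,
      kernel.lift_ι, HomologicalComplex.d_comp_d, zero_comp]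
    exact P.complex_d_comp_π_f_zero
  refine mono_aux (F.map (P.complex.d 2 1)) (F.map (P.complex.d 1 0))
    (F.map (kernel.lift (show P.complex.X 0 ⟶ X from P.π.f 0) (P.complex.d 1 0)
      P.complex_d_comp_π_f_zero)) (F.map (kernel.ι _)) ?_ ?_ ?_ ?_
  · rw [← Functor.map_comp, HomologicalComplex.d_comp_d, Functor.map_zero]
  · exact hsc
  · rw [← Functor.map_comp, kernel.lift_ι]
    exact P.complex_d_comp_π_f_zero
  · rw [← Functor.map_comp, hde0, Functor.map_zero]

/-- If the counit of an adjunction is an isomorphism, then the unit is an isomorphism at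
every object in the essential image of the right adjoint. -/
lemma isIso_unit_app {push : A ⥤ B} {pull : B ⥤ A} (adj : push ⊣ pull)
    [IsIso adj.counit] {X : A} (h : pull.essImage X) : IsIso (adj.unit.app X) := by
  obtain ⟨Y, ⟨i⟩⟩ := h
  have h1 : adj.unit.app (pull.obj Y) ≫ pull.map (adj.counit.app Y) = 𝟙 _ :=
    adj.right_triangle_components Y
  haveI : IsIso (pull.map (adj.counit.app Y)) := inferInstance
  haveI : IsIso (adj.unit.app (pull.obj Y)) := IsIso.of_isIso_fac_right h1
  have hn := adj.unit.naturality i.hom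
  have : adj.unit.app X = i.inv ≫ adj.unit.app (pull.obj Y) ≫ (push ⋙ pull).map i.hom := by
    rw [← hn]
    simp
  rw [this]
  infer_instance

end OmegaAux

/-- For an Ω-system with `𝒜` having enough projectives: if `0 → M' → M → M'' → 0` is a
short exact sequence in `𝒜` with `M'` and `M''` isomorphic to objects in the essential
image of `θ^*` but `M` not isomorphic to any such object, then `(L₁θ_*)(M'') ≠ 0`. -/
theorem omegaSystem_L1_nonzero_of_nonclosed_extension
    {A : Type*} {B : Type*} [Category A] [Category B] [Abelian A] [Abelian B]
    [EnoughProjectives A]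
    (push : A ⥤ B) (pull : B ⥤ A) [push.Additive] [pull.Additive]
    (S : OmegaSystem push pull)
    (E : ShortComplex A) (hE : E.ShortExact)
    (h₁ : pull.essImage E.X₁) (h₃ : pull.essImage E.X₃)
    (h₂ : ¬ pull.essImage E.X₂) :
    ¬ IsZero ((push.leftDerived 1).obj E.X₃) := by
  intro hz
  apply h₂
  haveI := S.isIso_counit
  haveI := hE.epi_g
  haveI := hE.mono_f
  haveI : PreservesColimitsOfSize.{0, 0} push := S.adj.leftAdjoint_preservesColimits
  haveI : PreservesFiniteColimits push := PreservesColimitsOfSize.preservesFiniteColimits push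
  haveI : PreservesLimitsOfSize.{0, 0} pull := S.adj.rightAdjoint_preservesLimits
  haveI : PreservesFiniteLimits pull := PreservesLimitsOfSize.preservesFiniteLimits pull
  obtain ⟨P⟩ := (inferInstance : HasProjectiveResolution E.X₃).out
  haveI : Epi (show P.complex.X 0 ⟶ E.X₃ from P.π.f 0) := inferInstanceAs (Epi (P.π.f 0))
  have hβ : Projective.factorThru (show P.complex.X 0 ⟶ E.X₃ from P.π.f 0) E.g ≫ E.g
      = (show P.complex.X 0 ⟶ E.X₃ from P.π.f 0) :=
    Projective.factorThru_comp _ _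
  have hιβ : (kernel.ι (show P.complex.X 0 ⟶ E.X₃ from P.π.f 0)
      ≫ Projective.factorThru (show P.complex.X 0 ⟶ E.X₃ from P.π.f 0) E.g) ≫ E.g = 0 := by
    rw [Category.assoc, hβ, kernel.condition]
  have hα := hE.exact.lift_f _ hιβ
  haveI hmono : Mono (push.map E.f) :=
    OmegaAux.mono_map_f push E hE (show P.complex.X 0 ⟶ E.X₃ from P.π.f 0) _ hβ _ hα
      (OmegaAux.mono_map_kernel_ι push P hz)
  haveI : Epi (push.map E.g) := preserves_epi_of_preservesColimit push E.g
  have hEF : (E.map push).ShortExact :=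
    { exact := hE.exact.map_of_epi_of_preservesCokernel push hE.epi_g inferInstance
      mono_f := hmono
      epi_g := inferInstanceAs (Epi (push.map E.g)) }
  haveI := hEF.mono_f
  haveI := hEF.epi_g
  have hEFG : ((E.map push).map pull).ShortExact :=
    { exact := hEF.exact.map_of_mono_of_preservesKernel pull hEF.mono_f inferInstance
      mono_f := preserves_mono_of_preservesLimit pull _
      epi_g := S.pull_epi _ hEF.epi_g }
  let φ : E ⟶ (E.map push).map pull :=
    { τ₁ := S.adj.unit.app E.X₁
      τ₂ := S.adj.unit.app E.X₂
      τ₃ := S.adj.unit.app E.X₃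
      comm₁₂ := by exact (S.adj.unit.naturality E.f).symm
      comm₂₃ := by exact (S.adj.unit.naturality E.g).symm }
  haveI : IsIso φ.τ₁ := OmegaAux.isIso_unit_app S.adj h₁
  haveI : IsIso φ.τ₃ := OmegaAux.isIso_unit_app S.adj h₃
  haveI : IsIso φ.τ₂ := ShortComplex.isIso₂_of_shortExact_of_isIso₁₃ φ hE hEFG
  haveI : IsIso (S.adj.unit.app E.X₂) := inferInstanceAs (IsIso φ.τ₂)
  exact ⟨push.obj E.X₂, ⟨(asIso (S.adj.unit.app E.X₂)).symm⟩⟩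
end

section
/- Let (𝒜, ℬ, θ_*, θ^*) be an Ω-system such that 𝒜 has enough projectives, and let X be a projective object of ℬ. Then there exists an Ω₁-resolution of X — that is, a diagram P₁ →^{∂₁} P₀ →^{ε} θ^*(X) → 0 in 𝒜 with P₀ and P₁ projective, with ε∘∂₁ = 0, such that ε is an epimorphism with kernel equal to the image of ∂₁ (so ε induces an isomorphism coker ∂₁ ≅ θ^*(X)), the sequence θ_*(P₁) → θ_*(P₀) → θ_*θ^*(X) → 0 is exact, and the morphism θ_*(im ∂₁) → θ_*(P₀) induced by the image inclusion is a monomorphism — if and only if (L₁θ_*)(θ^*(X)) = 0, where L₁θ_* denotes the first left derived functor of θ_*. -/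
open CategoryTheory CategoryTheory.Limits

namespace OmegaAux

variable {A : Type*} [Category A] [Abelian A] [EnoughProjectives A]

/-- Extend a two-step presentation to a chain complex by syzygies. -/
noncomputable def resComplex (P₀ P₁ : A) (d : P₁ ⟶ P₀) : ChainComplex A ℕ :=
  ChainComplex.mk' P₀ P₁ d (fun f => ⟨_, Projective.d f, by exact (Category.assoc _ _ _).trans ((congrArg _ (kernel.condition _)).trans comp_zero)⟩)

lemma resComplex_d_1_0 (P₀ P₁ : A) (d : P₁ ⟶ P₀) : (resComplex P₀ P₁ d).d 1 0 = d := by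
  simp [resComplex]

lemma resComplex_d_2_1 (P₀ P₁ : A) (d : P₁ ⟶ P₀) :
    (resComplex P₀ P₁ d).d 2 1 = Projective.d d := by
  simp [resComplex, ChainComplex.mk']

lemma resComplex_exactAt_succ (P₀ P₁ : A) (d : P₁ ⟶ P₀) (n : ℕ) :
    (resComplex P₀ P₁ d).ExactAt (n + 1) := by
  rw [HomologicalComplex.exactAt_iff' _ (n + 1 + 1) (n + 1) n (by simp) (by simp)]
  have h := exact_d_f ((resComplex P₀ P₁ d).d (n + 1) n)
  refine ShortComplex.exact_of_iso ?_ h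
  refine ShortComplex.isoMk (ChainComplex.mk'XIso P₀ P₁ d (fun f => ⟨_, Projective.d f, (Category.assoc _ _ _).trans ((congrArg _ (kernel.condition _)).trans comp_zero)⟩) n).symm (Iso.refl _) (Iso.refl _) ?_ ?_
  · have := ChainComplex.mk'_d P₀ P₁ d (fun f => ⟨_, Projective.d f, (Category.assoc _ _ _).trans ((congrArg _ (kernel.condition _)).trans comp_zero)⟩) n
    exact ((congrArg _ this).trans (Iso.inv_hom_id_assoc _ _)).trans (Category.comp_id _).symm
  · exact (Category.id_comp _).trans (Category.comp_id _).symm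

lemma resComplex_projective {P₀ P₁ : A} (hP₀ : Projective P₀) (hP₁ : Projective P₁)
    (d : P₁ ⟶ P₀) (n : ℕ) : Projective ((resComplex P₀ P₁ d).X n) := by
  obtain (_ | _ | _ | n) := n
  · exact hP₀
  · exact hP₁
  · apply Projective.projective_over
  · apply Projective.projective_over

/-- A projective resolution extending a two-step presentation. -/
noncomputable def resOf {M P₀ P₁ : A} (hP₀ : Projective P₀) (hP₁ : Projective P₁)
    (d : P₁ ⟶ P₀) (ε : P₀ ⟶ M) (w : d ≫ ε = 0) (hepi : Epi ε)
    (hex : (ShortComplex.mk d ε w).Exact) : ProjectiveResolution M where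
  complex := resComplex P₀ P₁ d
  projective := resComplex_projective hP₀ hP₁ d
  π := (ChainComplex.toSingle₀Equiv _ _).symm ⟨ε, by rw [resComplex_d_1_0]; exact w⟩
  quasiIso := ⟨fun n => by
    cases n with
    | zero =>
      rw [ChainComplex.quasiIsoAt₀_iff, ShortComplex.quasiIso_iff_of_zeros']
      · refine (ShortComplex.exact_and_epi_g_iff_of_iso ?_).2 ⟨hex, hepi⟩
        exact ShortComplex.isoMk (Iso.refl _) (Iso.refl _) (Iso.refl _)
          ((Category.id_comp _).trans ((resComplex_d_1_0 P₀ P₁ d).symm.trans (Category.comp_id _).symm)) (by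
            have h1 := ChainComplex.toSingle₀Equiv_symm_apply_f_zero (C := resComplex P₀ P₁ d) (X := M) ε (by rw [resComplex_d_1_0]; exact w)
            exact (Category.id_comp _).trans (h1.symm.trans (Category.comp_id _).symm))
      all_goals rfl
    | succ n =>
      rw [quasiIsoAt_iff_exactAt']
      · apply resComplex_exactAt_succ
      · apply ChainComplex.exactAt_succ_single_obj⟩


open scoped Pseudoelement

variable {B : Type*} [Category B] [Abelian B]

lemma exact_d_factorThruImage {P₀ P₁ : A} (d : P₁ ⟶ P₀) :
    (ShortComplex.mk (Projective.d d) (factorThruImage d)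
      (by rw [← cancel_mono (image.ι d), Category.assoc, image.fac, zero_comp]; exact (Category.assoc _ _ _).trans ((congrArg _ (kernel.condition _)).trans comp_zero))).Exact := by
  apply Abelian.Pseudoelement.exact_of_pseudo_exact
  intro b hb
  have hb' : Abelian.Pseudoelement.pseudoApply d b = 0 := by
    rw [← image.fac d, Abelian.Pseudoelement.comp_apply, hb, Abelian.Pseudoelement.apply_zero]
  exact Abelian.Pseudoelement.pseudo_exact_of_exact (exact_d_f d) b hb'

/-- The key computation: for a presentation `P₁ → P₀ → M → 0` by projectives, the first
left derived functor of a right exact `F` vanishes at `M` iff `F` preserves the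
monomorphism `im d ⟶ P₀`. -/
lemma isZero_leftDerived_one_iff_s6 (F : A ⥤ B) [F.Additive] [PreservesFiniteColimits F]
    {M P₀ P₁ : A} (hP₀ : Projective P₀) (hP₁ : Projective P₁)
    (d : P₁ ⟶ P₀) (ε : P₀ ⟶ M) (w : d ≫ ε = 0) (hepi : Epi ε)
    (hex : (ShortComplex.mk d ε w).Exact) :
    IsZero ((F.leftDerived 1).obj M) ↔ Mono (F.map (image.ι d)) := by
  let P : ProjectiveResolution M := resOf hP₀ hP₁ d ε w hepi hex
  have e1 : IsZero ((F.leftDerived 1).obj M) ↔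
      IsZero (((F.mapHomologicalComplex _).obj P.complex).homology 1) :=
    (P.isoLeftDerivedObj F 1).isZero_iff
  rw [e1, ← HomologicalComplex.exactAt_iff_isZero_homology,
    HomologicalComplex.exactAt_iff' _ 2 1 0 (by simp) (by simp)]
  have hd10 : ((F.mapHomologicalComplex _).obj P.complex).d 1 0 = F.map d := by
    dsimp [P, resOf]; exact F.congr_map (resComplex_d_1_0 P₀ P₁ d)
  have hd21 : ((F.mapHomologicalComplex _).obj P.complex).d 2 1 = F.map (Projective.d d) := by
    dsimp [P, resOf]; exact F.congr_map (resComplex_d_2_1 P₀ P₁ d)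
  have w2 : F.map (Projective.d d) ≫ F.map d = 0 := by
    rw [← F.map_comp, show Projective.d d ≫ d = 0 from (Category.assoc _ _ _).trans ((congrArg _ (kernel.condition _)).trans comp_zero)]; simp
  have e2 : (((F.mapHomologicalComplex _).obj P.complex).sc' 2 1 0).Exact ↔
      (ShortComplex.mk (F.map (Projective.d d)) (F.map d) w2).Exact := by
    refine ShortComplex.exact_iff_of_iso ?_
    exact ShortComplex.isoMk (Iso.refl _) (Iso.refl _) (Iso.refl _)
      ((Category.id_comp _).trans (hd21.symm.trans (Category.comp_id _).symm)) ((Category.id_comp _).trans (hd10.symm.trans (Category.comp_id _).symm))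
  rw [e2]
  -- now the pseudoelement argument
  have hS' := exact_d_factorThruImage d
  have hmapS' := hS'.map_of_epi_of_preservesCokernel F (by dsimp; infer_instance) inferInstance
  have hfac : F.map d = F.map (factorThruImage d) ≫ F.map (image.ι d) := by
    rw [← F.map_comp, image.fac]
  have hepi' : Epi (F.map (factorThruImage d)) := inferInstance
  have hzero : F.map (Projective.d d) ≫ F.map (factorThruImage d) = 0 := by
    rw [← F.map_comp]
    rw [show Projective.d d ≫ factorThruImage d = 0 from
      by rw [← cancel_mono (image.ι d), Category.assoc, image.fac, zero_comp]; exact (Category.assoc _ _ _).trans ((congrArg _ (kernel.condition _)).trans comp_zero)]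
    simp
  constructor
  · intro hexact
    apply Abelian.Pseudoelement.mono_of_zero_of_map_zero
    intro a ha
    obtain ⟨y, hy⟩ := Abelian.Pseudoelement.pseudo_surjective_of_epi (F.map (factorThruImage d)) a
    have hdy : Abelian.Pseudoelement.pseudoApply (F.map d) y = 0 := by
      rw [hfac, Abelian.Pseudoelement.comp_apply, hy, ha]
    obtain ⟨z, hz⟩ := Abelian.Pseudoelement.pseudo_exact_of_exact hexact y hdy
    rw [← hy, ← hz, ← Abelian.Pseudoelement.comp_apply, hzero, Abelian.Pseudoelement.zero_apply]
  · intro hmono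
    apply Abelian.Pseudoelement.exact_of_pseudo_exact
    intro b hb
    have hb' : Abelian.Pseudoelement.pseudoApply (F.map (image.ι d))
        (Abelian.Pseudoelement.pseudoApply (F.map (factorThruImage d)) b) = 0 := by
      rw [← Abelian.Pseudoelement.comp_apply, ← hfac, hb]
    have hb'' : Abelian.Pseudoelement.pseudoApply (F.map (factorThruImage d)) b = 0 :=
      Abelian.Pseudoelement.zero_of_map_zero _ (Abelian.Pseudoelement.pseudo_injective_of_mono _) _ hb'
    exact Abelian.Pseudoelement.pseudo_exact_of_exact hmapS' b hb''

end OmegaAux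

/-- For an Ω-system with `𝒜` having enough projectives and a projective object `X` of `ℬ`:
there exists an `Ω₁`-resolution of `X` (a diagram `P₁ → P₀ → θ^*(X) → 0` with `P₀`, `P₁`
projective, exact at `P₀` and at `θ^*(X)`, whose image under `θ_*` augmented by
`θ_*θ^*(X) → 0` is exact, and such that `θ_*(im ∂₁) → θ_*(P₀)` is a monomorphism) if and
only if `(L₁θ_*)(θ^*(X)) = 0`. -/
theorem omegaSystem_exists_omega₁_resolution_iff_L1_vanishes
    {A : Type*} {B : Type*} [Category A] [Category B] [Abelian A] [Abelian B]
    [EnoughProjectives A]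
    (push : A ⥤ B) (pull : B ⥤ A) [push.Additive] [pull.Additive]
    (S : OmegaSystem push pull)
    {X : B} (hX : Projective X) :
    (∃ (P₁ P₀ : A) (d : P₁ ⟶ P₀) (ε : P₀ ⟶ pull.obj X),
      Projective P₁ ∧ Projective P₀ ∧
      ∃ w : d ≫ ε = 0,
        Epi ε ∧ (ShortComplex.mk d ε w).Exact ∧
        Epi (push.map ε) ∧
        (ShortComplex.mk (push.map d) (push.map ε)
          (by rw [← push.map_comp, w, Functor.map_zero])).Exact ∧
        Mono (push.map (image.ι d))) ↔
    IsZero ((push.leftDerived 1).obj (pull.obj X)) := by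
  haveI : PreservesColimits push := S.adj.leftAdjoint_preservesColimits
  constructor
  · rintro ⟨P₁, P₀, d, ε, hP₁, hP₀, w, hepi, hex, -, -, hmono⟩
    exact (OmegaAux.isZero_leftDerived_one_iff_s6 push hP₀ hP₁ d ε w hepi hex).2 hmono
  · intro hz
    set M := pull.obj X
    refine ⟨Projective.syzygies (Projective.π M), Projective.over M,
      Projective.d (Projective.π M), Projective.π M, inferInstance, inferInstance,
      by exact (Category.assoc _ _ _).trans ((congrArg _ (kernel.condition _)).trans comp_zero), inferInstance, exact_d_f (Projective.π M), inferInstance, ?_, ?_⟩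
    · exact (exact_d_f (Projective.π M)).map_of_epi_of_preservesCokernel push
        (by dsimp; infer_instance) inferInstance
    · exact (OmegaAux.isZero_leftDerived_one_iff_s6 push inferInstance inferInstance
        (Projective.d (Projective.π M)) (Projective.π M) (by exact (Category.assoc _ _ _).trans ((congrArg _ (kernel.condition _)).trans comp_zero)) inferInstance
        (exact_d_f (Projective.π M))).1 hz
end

section
/- Let 𝒜 be an abelian category with all small colimits, and let θ : 𝒞 ⥤ 𝒟 be a functor between small categories such that: (i) θ is surjective on objects; (ii) every morphism of 𝒟 is a finite composite of morphisms of the form θ(φ) and of inverses θ(ψ)⁻¹, where φ and ψ are morphisms of 𝒞 and θ(ψ) is an isomorphism in 𝒟 (θ is quasisurjective); and (iii) for each object d of 𝒟, all objects of the form (c, id_d) with θ(c) = d lie in the same connected component (i.e., are connected by zigzags of morphisms) of the full subcategory of the comma category θ ↓ d whose objects are the pairs (c, φ) with φ : θ(c) → d an isomorphism in 𝒟. Let θ^* : 𝒜^𝒟 ⥤ 𝒜^𝒞 be precomposition with θ and θ_* : 𝒜^𝒞 ⥤ 𝒜^𝒟 left Kan extension along θ. Then (𝒜^𝒞, 𝒜^𝒟,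 θ_*, θ^*) is an Ω-system; in particular, the counit θ_*∘θ^* ⟶ Id of the Kan extension adjunction is an isomorphism. -/
open CategoryTheory CategoryTheory.Limits

universe v u

/-- The morphisms of `D` that are finite composites of morphisms of the form `θ(φ)` and
of inverses of isomorphisms of the form `θ(ψ)`, for morphisms `φ`, `ψ` of `C`.
The functor `θ` is *quasisurjective* if it is surjective on objects and every morphism of
`D` belongs to this class. -/
inductive QuasiImage {C : Type v} {D : Type v} [SmallCategory C] [SmallCategory D]
    (θ : C ⥤ D) : ∀ {d d' : D}, (d ⟶ d') → Prop
  | of {c c' : C} (φ : c ⟶ c') : QuasiImage θ (θ.map φ)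
  | inv {c c' : C} (ψ : c ⟶ c') (g : θ.obj c' ⟶ θ.obj c)
      (hg₁ : θ.map ψ ≫ g = 𝟙 _) (hg₂ : g ≫ θ.map ψ = 𝟙 _) : QuasiImage θ g
  | comp {d d' d'' : D} (f : d ⟶ d') (g : d' ⟶ d'') :
      QuasiImage θ f → QuasiImage θ g → QuasiImage θ (f ≫ g)

namespace OmegaSystemAux

variable {C : Type v} {D : Type v} [SmallCategory C] [SmallCategory D]
  {A : Type u} [Category.{v} A] (θ : C ⥤ D) (G : D ⥤ A)

/-- Transfer the cocone compatibility property along a single morphism of the comma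
category whose underlying morphism becomes an isomorphism. -/
lemma step {d' d : D} (g : d' ⟶ d) (s : Cocone (CostructuredArrow.proj θ d ⋙ θ ⋙ G))
    (τ : G.obj d ⟶ s.pt) {X Y : CostructuredArrow θ d'} (f : X ⟶ Y)
    (hiso : IsIso (G.map (θ.map f.left))) :
    (G.map (X.hom ≫ g) ≫ τ = s.ι.app (CostructuredArrow.mk (X.hom ≫ g))) ↔
      (G.map (Y.hom ≫ g) ≫ τ = s.ι.app (CostructuredArrow.mk (Y.hom ≫ g))) := by
  have w : θ.map f.left ≫ Y.hom = X.hom := CostructuredArrow.w f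
  have hw := s.w (CostructuredArrow.homMk f.left
    (by dsimp; rw [← w, Category.assoc]) :
      CostructuredArrow.mk (X.hom ≫ g) ⟶ CostructuredArrow.mk (Y.hom ≫ g))
  have hw' : G.map (θ.map f.left) ≫ s.ι.app (CostructuredArrow.mk (Y.hom ≫ g)) =
      s.ι.app (CostructuredArrow.mk (X.hom ≫ g)) := by exact hw
  have hmap : G.map (X.hom ≫ g) = G.map (θ.map f.left) ≫ G.map (Y.hom ≫ g) := by
    rw [← G.map_comp, ← Category.assoc, w]
  constructor
  · intro h
    refine (cancel_epi (G.map (θ.map f.left))).1 ?_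
    rw [← Category.assoc, ← hmap, h, hw']
  · intro h
    rw [hmap, Category.assoc, h, hw']

/-- Transfer the cocone compatibility property along a zigzag in the full subcategory of
the comma category on the objects whose structure morphism is an isomorphism. -/
lemma transfer {d' d : D} (g : d' ⟶ d) (s : Cocone (CostructuredArrow.proj θ d ⋙ θ ⋙ G))
    (τ : G.obj d ⟶ s.pt)
    {X Y : ObjectProperty.FullSubcategory (fun Z : CostructuredArrow θ d' => IsIso Z.hom)}
    (hz : Zigzag X Y) :
    (G.map (X.obj.hom ≫ g) ≫ τ = s.ι.app (CostructuredArrow.mk (X.obj.hom ≫ g))) ↔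
      (G.map (Y.obj.hom ≫ g) ≫ τ = s.ι.app (CostructuredArrow.mk (Y.obj.hom ≫ g))) := by
  have key : ∀ (P Q : ObjectProperty.FullSubcategory (fun Z : CostructuredArrow θ d' => IsIso Z.hom))
      (f : P.obj ⟶ Q.obj),
      (G.map (P.obj.hom ≫ g) ≫ τ = s.ι.app (CostructuredArrow.mk (P.obj.hom ≫ g))) ↔
        (G.map (Q.obj.hom ≫ g) ≫ τ = s.ι.app (CostructuredArrow.mk (Q.obj.hom ≫ g))) := by
    intro P Q f
    haveI hP := P.property
    haveI hQ := Q.property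
    have hf : θ.map f.left = P.obj.hom ≫ inv Q.obj.hom := by
      rw [← CostructuredArrow.w f]; simp
    refine step θ G g s τ f ?_
    rw [hf]
    infer_instance
  induction hz with
  | refl => exact Iff.rfl
  | tail hab hbc ih =>
    refine ih.trans ?_
    obtain hf | hf := hbc
    · obtain ⟨f⟩ := hf
      exact key _ _ f.hom
    · obtain ⟨f⟩ := hf
      exact (key _ _ f.hom).symm

/-- Transport the cocone compatibility property along an equality of morphisms. -/
lemma of_eq {d : D} (s : Cocone (CostructuredArrow.proj θ d ⋙ θ ⋙ G)) (τ : G.obj d ⟶ s.pt)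
    {c : C} {x y : θ.obj c ⟶ d} (h : x = y)
    (hx : G.map x ≫ τ = s.ι.app (CostructuredArrow.mk x)) :
    G.map y ≫ τ = s.ι.app (CostructuredArrow.mk y) := by subst h; exact hx

/-- The main induction: compatibility with the distinguished cocone leg holds for every
object of the comma category whose structure map is a quasi-image morphism. -/
lemma main
    (hconn : ∀ (d : D) (c c' : C) (h : θ.obj c = d) (h' : θ.obj c' = d),
      Zigzag (J := ObjectProperty.FullSubcategory (fun X : CostructuredArrow θ d => IsIso X.hom))
        ⟨CostructuredArrow.mk (eqToHom h), by
          rw [CostructuredArrow.mk_hom_eq_self]; infer_instance⟩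
        ⟨CostructuredArrow.mk (eqToHom h'), by
          rw [CostructuredArrow.mk_hom_eq_self]; infer_instance⟩)
    {d' d : D} {g : d' ⟶ d} (hg : QuasiImage θ g) :
    ∀ (s : Cocone (CostructuredArrow.proj θ d ⋙ θ ⋙ G)) (τ : G.obj d ⟶ s.pt),
      (∀ (c₁ : C) (e₁ : θ.obj c₁ = d),
        G.map (eqToHom e₁) ≫ τ = s.ι.app (CostructuredArrow.mk (eqToHom e₁))) →
      ∀ (c : C) (e : θ.obj c = d'),
      G.map (eqToHom e ≫ g) ≫ τ = s.ι.app (CostructuredArrow.mk (eqToHom e ≫ g)) := by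
  induction hg with
  | @of c₁ c₁' f =>
    intro s τ hτ c e
    have hP : G.map (𝟙 (θ.obj c₁) ≫ θ.map f) ≫ τ =
        s.ι.app (CostructuredArrow.mk (𝟙 (θ.obj c₁) ≫ θ.map f)) := by
      have h1 := hτ c₁' rfl
      have hw := s.w (CostructuredArrow.homMk f (by simp) :
        CostructuredArrow.mk (𝟙 (θ.obj c₁) ≫ θ.map f) ⟶
          CostructuredArrow.mk (eqToHom (rfl : θ.obj c₁' = θ.obj c₁')))
      have hw' : G.map (θ.map f) ≫
          s.ι.app (CostructuredArrow.mk (eqToHom (rfl : θ.obj c₁' = θ.obj c₁'))) =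
          s.ι.app (CostructuredArrow.mk (𝟙 (θ.obj c₁) ≫ θ.map f)) := by exact hw
      rw [← hw', ← h1]
      rw [← Category.assoc, ← G.map_comp]
      simp
    have ht := transfer θ G (θ.map f) s τ (hconn (θ.obj c₁) c c₁ e rfl)
    simp only [CostructuredArrow.mk_hom_eq_self, eqToHom_refl] at ht
    exact ht.mpr hP
  | @inv c₁ c₁' ψ gg hg₁ hg₂ =>
    intro s τ hτ c e
    have hP : G.map (𝟙 (θ.obj c₁') ≫ gg) ≫ τ =
        s.ι.app (CostructuredArrow.mk (𝟙 (θ.obj c₁') ≫ gg)) := by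
      have h1 := hτ c₁ rfl
      have hw := s.w (CostructuredArrow.homMk ψ (by simpa using hg₁) :
        CostructuredArrow.mk (eqToHom (rfl : θ.obj c₁ = θ.obj c₁)) ⟶
          CostructuredArrow.mk (𝟙 (θ.obj c₁') ≫ gg))
      have hw' : G.map (θ.map ψ) ≫ s.ι.app (CostructuredArrow.mk (𝟙 (θ.obj c₁') ≫ gg)) =
          s.ι.app (CostructuredArrow.mk (eqToHom (rfl : θ.obj c₁ = θ.obj c₁))) := by
        exact hw
      calc G.map (𝟙 (θ.obj c₁') ≫ gg) ≫ τ
          = G.map gg ≫ G.map (eqToHom (rfl : θ.obj c₁ = θ.obj c₁)) ≫ τ := by simp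
        _ = G.map gg ≫ s.ι.app (CostructuredArrow.mk (eqToHom (rfl : θ.obj c₁ = θ.obj c₁))) := by
            rw [h1]
        _ = G.map gg ≫ G.map (θ.map ψ) ≫
              s.ι.app (CostructuredArrow.mk (𝟙 (θ.obj c₁') ≫ gg)) := by rw [hw']
        _ = (show G.obj (θ.obj c₁') ⟶ s.pt from s.ι.app (CostructuredArrow.mk (𝟙 (θ.obj c₁') ≫ gg))) := by
            erw [← Category.assoc, ← G.map_comp, hg₂]
            erw [G.map_id]
            exact Category.id_comp _
    have ht := transfer θ G gg s τ (hconn (θ.obj c₁') c c₁' e rfl)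
    simp only [CostructuredArrow.mk_hom_eq_self, eqToHom_refl] at ht
    exact ht.mpr hP
  | @comp d₀ d₁ d₂ f g hf hg ihf ihg =>
    intro s τ hτ c e
    let s' : Cocone (CostructuredArrow.proj θ d₁ ⋙ θ ⋙ G) :=
      { pt := s.pt
        ι :=
          { app := fun X => s.ι.app (CostructuredArrow.mk (X.hom ≫ g))
            naturality := fun X Y m => by
              dsimp
              erw [Category.comp_id]
              exact s.w (CostructuredArrow.homMk m.left
                (by dsimp; rw [← CostructuredArrow.w m, Category.assoc]) :
                  CostructuredArrow.mk (X.hom ≫ g) ⟶ CostructuredArrow.mk (Y.hom ≫ g)) } }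
    have hτ' : ∀ (c₁ : C) (e₁ : θ.obj c₁ = d₁),
        G.map (eqToHom e₁) ≫ (G.map g ≫ τ) = s'.ι.app (CostructuredArrow.mk (eqToHom e₁)) := by
      intro c₁ e₁
      have h := ihg s τ hτ c₁ e₁
      simpa [s', G.map_comp, CostructuredArrow.mk_hom_eq_self] using h
    have h := ihf s' (G.map g ≫ τ) hτ' c e
    have hassoc : eqToHom e ≫ f ≫ g = (eqToHom e ≫ f) ≫ g := by simp
    rw [hassoc]
    simpa [s', G.map_comp, CostructuredArrow.mk_hom_eq_self] using h

end OmegaSystemAux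

/-- Let `𝒜` be an abelian category with all small colimits and `θ : 𝒞 ⥤ 𝒟` a
quasisurjective functor between small categories such that for each object `d` of `𝒟`,
all objects `(c, id_d)` with `θ(c) = d` lie in the same connected component of the full
subcategory of the comma category `θ ↓ d` on the objects `(c, φ)` with `φ` an
isomorphism.  Then precomposition `θ^* : 𝒜^𝒟 ⥤ 𝒜^𝒞` and left Kan extension
`θ_* : 𝒜^𝒞 ⥤ 𝒜^𝒟` form an Ω-system: both are additive, `θ_*` is left adjoint to `θ^*`,
the counit of the Kan adjunction is an isomorphism, and `θ^*` preserves epimorphisms. -/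
theorem functorCategory_lan_whiskeringLeft_omegaSystem
    {C : Type v} {D : Type v} [SmallCategory C] [SmallCategory D]
    (A : Type u) [Category.{v} A] [Abelian A] [HasColimitsOfSize.{v, v} A]
    (θ : C ⥤ D)
    (hobj : Function.Surjective θ.obj)
    (hquasi : ∀ {d d' : D} (f : d ⟶ d'), QuasiImage θ f)
    (hconn : ∀ (d : D) (c c' : C) (h : θ.obj c = d) (h' : θ.obj c' = d),
      Zigzag (J := ObjectProperty.FullSubcategory (fun X : CostructuredArrow θ d => IsIso X.hom))
        ⟨CostructuredArrow.mk (eqToHom h), by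
          rw [CostructuredArrow.mk_hom_eq_self]; infer_instance⟩
        ⟨CostructuredArrow.mk (eqToHom h'), by
          rw [CostructuredArrow.mk_hom_eq_self]; infer_instance⟩) :
    (θ.lan : (C ⥤ A) ⥤ (D ⥤ A)).Additive ∧
    ((Functor.whiskeringLeft C D A).obj θ).Additive ∧
    IsIso (θ.lanAdjunction A).counit ∧
    (∀ ⦃F F' : D ⥤ A⦄ (f : F ⟶ F'), Epi f →
      Epi (((Functor.whiskeringLeft C D A).obj θ).map f)) := by
  refine ⟨?_, ?_, ?_, ?_⟩
  · -- `θ.lan` is additive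
    haveI : (θ.lan : (C ⥤ A) ⥤ (D ⥤ A)).IsLeftAdjoint := (θ.lanAdjunction A).isLeftAdjoint
    haveI : PreservesColimitsOfSize.{0, 0} (θ.lan : (C ⥤ A) ⥤ (D ⥤ A)) :=
      (θ.lanAdjunction A).leftAdjoint_preservesColimits
    haveI := preservesBinaryBiproducts_of_preservesBinaryCoproducts
      (θ.lan : (C ⥤ A) ⥤ (D ⥤ A))
    exact Functor.additive_of_preservesBinaryBiproducts _
  · -- precomposition is additive
    exact { map_add := by intro F G f g; ext c; simp }
  · -- the counit is an isomorphism
    rw [NatTrans.isIso_iff_isIso_app]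
    intro G
    rw [θ.isIso_lanAdjunction_counit_app_iff]
    have hpw0 : ∀ d : D, Nonempty
        ((Functor.LeftExtension.mk G (𝟙 (θ ⋙ G))).IsPointwiseLeftKanExtensionAt d) := by
      intro d
      obtain ⟨c₀, h₀⟩ := hobj d
      have hτ : ∀ (s : Cocone (CostructuredArrow.proj θ d ⋙ θ ⋙ G)) (c₁ : C)
          (e₁ : θ.obj c₁ = d),
          G.map (eqToHom e₁) ≫
              (G.map (eqToHom h₀.symm) ≫ s.ι.app (CostructuredArrow.mk (eqToHom h₀))) =
            s.ι.app (CostructuredArrow.mk (eqToHom e₁)) := by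
        intro s c₁ e₁
        have ht := OmegaSystemAux.transfer θ G (𝟙 d) s
          (G.map (eqToHom h₀.symm) ≫ s.ι.app (CostructuredArrow.mk (eqToHom h₀)))
          (hconn d c₁ c₀ e₁ h₀)
        simp only [CostructuredArrow.mk_hom_eq_self] at ht
        have hbase : G.map (eqToHom h₀) ≫
            (G.map (eqToHom h₀.symm) ≫ s.ι.app (CostructuredArrow.mk (eqToHom h₀))) =
            s.ι.app (CostructuredArrow.mk (eqToHom h₀)) := by
          erw [← Category.assoc, ← G.map_comp, eqToHom_trans, eqToHom_refl, G.map_id,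
            Category.id_comp]
        exact OmegaSystemAux.of_eq θ G s _ (Category.comp_id (eqToHom e₁))
          (ht.mpr (OmegaSystemAux.of_eq θ G s _ (Category.comp_id (eqToHom h₀)).symm hbase))
      refine ⟨?_⟩
      exact
        { desc := fun s =>
            G.map (eqToHom h₀.symm) ≫ s.ι.app (CostructuredArrow.mk (eqToHom h₀))
          fac := fun s j => by
            obtain ⟨cj, ⟨⟨⟩⟩, φ⟩ := j
            have h := OmegaSystemAux.main θ G hconn (hquasi φ) s
              (G.map (eqToHom h₀.symm) ≫ s.ι.app (CostructuredArrow.mk (eqToHom h₀)))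
              (hτ s) cj rfl
            have h' := OmegaSystemAux.of_eq θ G s _
              (show eqToHom (rfl : θ.obj cj = θ.obj cj) ≫ φ = φ by simp) h
            refine Eq.trans ?_ h'
            exact congrArg (fun x => x ≫ _) (Category.id_comp (G.map φ))
          uniq := fun s m hm => by
            have h : G.map (eqToHom h₀) ≫ m = s.ι.app (CostructuredArrow.mk (eqToHom h₀)) := by
              have hm' := hm (CostructuredArrow.mk (eqToHom h₀))
              exact (congrArg (fun x => x ≫ m) (Category.id_comp (G.map (eqToHom h₀)))).symm.trans hm'
            refine Eq.trans (?_ : m = G.map (eqToHom h₀.symm) ≫ G.map (eqToHom h₀) ≫ m) ?_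
            · erw [← Category.assoc, ← G.map_comp, eqToHom_trans, eqToHom_refl, G.map_id]
              exact (Category.id_comp m).symm
            · rw [h]
              exact rfl }
    exact Functor.LeftExtension.IsPointwiseLeftKanExtension.isLeftKanExtension
      (fun d => (hpw0 d).some)
  · -- precomposition preserves epimorphisms
    intro F F' f hf
    haveI := hf
    haveI : ∀ (c : C), Epi ((((Functor.whiskeringLeft C D A).obj θ).map f).app c) := by
      intro c
      show Epi (f.app (θ.obj c))
      infer_instance
    exact NatTrans.epi_of_epi_app _
end

section
/- Let R be a commutative ring and θ : 𝒞 ⥤ 𝒟 a functor between small categories that is bijective on objects and surjective on morphisms (every morphism of 𝒟 is the image under θ of a morphism of 𝒞). Let θ^* : (𝒟 ⥤ ModuleCat R) ⥤ (𝒞 ⥤ ModuleCat R) be precomposition with θ and θ_* the left Kan extension along θ. Then (𝒞 ⥤ ModuleCat R, 𝒟 ⥤ ModuleCat R, θ_*, θ^*) is an Ω-system, and the essential image of θ^* is closed under subobjects: every subobject of an R𝒞-module isomorphic to one of the form θ^*(N) is itself isomorphic to an R𝒞-module of the form θ^*(N'). -/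
open CategoryTheory CategoryTheory.Limits

universe u

namespace OmegaSystemAux

variable {R : Type u} [CommRing R] {C D : Type u} [SmallCategory C] [SmallCategory D]
  (θ : C ⥤ D)

section EssImage

variable {M : C ⥤ ModuleCat.{u} R} {N₀ : D ⥤ ModuleCat.{u} R} (j : M ⟶ θ ⋙ N₀)

/-- If `M` admits a monomorphism into a restricted module `θ ⋙ N₀`, then `M.map`
only depends on the image of the morphism under `θ`. -/
lemma map_eq_of_theta_eq (hj : ∀ c, Mono (j.app c)) {c c' : C} (f f' : c ⟶ c')
    (h : θ.map f = θ.map f') : M.map f = M.map f' := by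
  haveI := hj c'
  rw [← cancel_mono (j.app c'), j.naturality, j.naturality]
  dsimp
  rw [h]

/-- `eqToHom`-decorated version of `map_eq_of_theta_eq`. -/
lemma map_eq_of_theta_eq' (hj : ∀ c, Mono (j.app c)) {c c' c₂ c₂' : C}
    (hc : c₂ = c) (hc' : c₂' = c') (f : c ⟶ c') (f₁ : c₂ ⟶ c₂')
    (h : θ.map f₁ = eqToHom (by rw [hc]) ≫ θ.map f ≫ eqToHom (by rw [hc'])) :
    M.map f₁ = eqToHom (by rw [hc]) ≫ M.map f ≫ eqToHom (by rw [hc']) := by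
  subst hc hc'
  simp only [eqToHom_refl, Category.id_comp, Category.comp_id] at h ⊢
  exact map_eq_of_theta_eq θ j hj _ _ h

variable (σ : D → C) (h1 : ∀ d, θ.obj (σ d) = d)
  (hmor : ∀ {c c' : C} (g : θ.obj c ⟶ θ.obj c'), ∃ f : c ⟶ c', θ.map f = g)

/-- The `R𝒟`-module obtained by transporting `M` along the object bijection. -/
noncomputable def push (hj : ∀ c, Mono (j.app c)) : D ⥤ ModuleCat.{u} R where
  obj d := M.obj (σ d)
  map {d d'} g := M.map (hmor (eqToHom (h1 d) ≫ g ≫ eqToHom (h1 d').symm)).choose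
  map_id d := by
    have hs := (hmor (eqToHom (h1 d) ≫ 𝟙 d ≫ eqToHom (h1 d).symm)).choose_spec
    rw [map_eq_of_theta_eq θ j hj _ (𝟙 (σ d)) (by rw [hs]; simp), M.map_id]
  map_comp {d d' d''} g g' := by
    have hs := (hmor (eqToHom (h1 d) ≫ (g ≫ g') ≫ eqToHom (h1 d'').symm)).choose_spec
    have hs1 := (hmor (eqToHom (h1 d) ≫ g ≫ eqToHom (h1 d').symm)).choose_spec
    have hs2 := (hmor (eqToHom (h1 d') ≫ g' ≫ eqToHom (h1 d'').symm)).choose_spec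
    rw [map_eq_of_theta_eq θ j hj _
      ((hmor (eqToHom (h1 d) ≫ g ≫ eqToHom (h1 d').symm)).choose ≫
        (hmor (eqToHom (h1 d') ≫ g' ≫ eqToHom (h1 d'').symm)).choose)
      (by rw [hs, θ.map_comp, hs1, hs2]; simp), M.map_comp]

/-- The restriction of `push` along `θ` is isomorphic to `M`. -/
noncomputable def pushIso (hj : ∀ c, Mono (j.app c)) (h2 : ∀ c, σ (θ.obj c) = c) :
    θ ⋙ push θ j σ h1 hmor hj ≅ M := by
  refine NatIso.ofComponents (fun c => eqToIso (congrArg M.obj (h2 c))) ?_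
  intro c c' f
  dsimp [push]
  have hs := (hmor (eqToHom (h1 (θ.obj c)) ≫ θ.map f ≫ eqToHom (h1 (θ.obj c')).symm)).choose_spec
  rw [map_eq_of_theta_eq' θ j hj (h2 c) (h2 c') f _ (by rw [hs])]
  simp

end EssImage

end OmegaSystemAux

open OmegaSystemAux in
/-- Let `R` be a commutative ring and `θ : 𝒞 ⥤ 𝒟` a functor between small categories
that is bijective on objects and surjective on morphisms.  Then left Kan extension
`θ_*` along `θ` and precomposition `θ^*` form an Ω-system on the categories of
`R𝒞`-modules and `R𝒟`-modules (both functors are additive, `θ_* ⊣ θ^*`, the counit of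
the Kan adjunction is an isomorphism, `θ^*` preserves epimorphisms), and the essential
image of `θ^*` is closed under subobjects. -/
theorem bijObj_surjMor_omegaSystem_closed_under_subobjects
    (R : Type u) [CommRing R] {C D : Type u} [SmallCategory C] [SmallCategory D]
    (θ : C ⥤ D)
    (hobj : Function.Bijective θ.obj)
    (hmor : ∀ {c c' : C} (g : θ.obj c ⟶ θ.obj c'), ∃ f : c ⟶ c', θ.map f = g) :
    (θ.lan : (C ⥤ ModuleCat.{u} R) ⥤ (D ⥤ ModuleCat.{u} R)).Additive ∧
    ((Functor.whiskeringLeft C D (ModuleCat.{u} R)).obj θ).Additive ∧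
    IsIso (θ.lanAdjunction (ModuleCat.{u} R)).counit ∧
    (∀ ⦃M N : D ⥤ ModuleCat.{u} R⦄ (f : M ⟶ N), Epi f →
      Epi (((Functor.whiskeringLeft C D (ModuleCat.{u} R)).obj θ).map f)) ∧
    (∀ {M N : C ⥤ ModuleCat.{u} R} (i : M ⟶ N), Mono i →
      ((Functor.whiskeringLeft C D (ModuleCat.{u} R)).obj θ).essImage N →
      ((Functor.whiskeringLeft C D (ModuleCat.{u} R)).obj θ).essImage M) := by
  -- notation for the object bijection
  set e : C ≃ D := Equiv.ofBijective θ.obj hobj with he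
  have h1 : ∀ d, θ.obj (e.symm d) = d := fun d => e.apply_symm_apply d
  have h2 : ∀ c, e.symm (θ.obj c) = c := fun c => e.symm_apply_apply c
  -- θ^* is faithful
  haveI hfaith : ((Functor.whiskeringLeft C D (ModuleCat.{u} R)).obj θ).Faithful := by
    constructor
    intro M N α β h
    apply NatTrans.ext
    funext d
    obtain ⟨c, rfl⟩ := hobj.2 d
    exact congrArg (fun γ => γ.app c) h
  -- θ^* is full
  haveI hfull : ((Functor.whiskeringLeft C D (ModuleCat.{u} R)).obj θ).Full := by
    constructor
    intro M N β
    refine ⟨{ app := fun d => eqToHom (congrArg M.obj (h1 d)).symm ≫ β.app (e.symm d) ≫ eqToHom (congrArg N.obj (h1 d)), naturality := ?_ }, ?_⟩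
    · intro d d' g
      obtain ⟨f, hf⟩ := hmor (eqToHom (h1 d) ≫ g ≫ eqToHom (h1 d').symm)
      have h' := β.naturality f
      dsimp at h'
      rw [hf] at h'
      simp only [Functor.map_comp, eqToHom_map, Category.assoc] at h'
      rw [← cancel_epi (eqToHom (show M.obj (θ.obj (e.symm d)) = M.obj d by rw [h1 d]))]
      simp only [Category.assoc, eqToHom_trans_assoc, eqToHom_refl, Category.id_comp]
      rw [reassoc_of% h']
      simp
    · apply NatTrans.ext
      funext c
      have hnat := β.naturality (eqToHom (h2 c))
      simp only [Functor.comp_map, eqToHom_map] at hnat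
      dsimp
      rw [← hnat]
      simp
  refine ⟨?_, ?_, ?_, ?_, ?_⟩
  · -- θ_* = lan is additive
    haveI := (θ.lanAdjunction (ModuleCat.{u} R)).leftAdjoint_preservesColimits
    haveI : (θ.lan : (C ⥤ ModuleCat.{u} R) ⥤ (D ⥤ ModuleCat.{u} R)).IsLeftAdjoint :=
      ⟨_, ⟨θ.lanAdjunction (ModuleCat.{u} R)⟩⟩
    haveI := preservesBinaryBiproducts_of_preservesBinaryCoproducts
      (θ.lan : (C ⥤ ModuleCat.{u} R) ⥤ (D ⥤ ModuleCat.{u} R))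
    exact Functor.additive_of_preservesBinaryBiproducts _
  · -- θ^* is additive
    constructor
    intro M N f g
    apply NatTrans.ext
    funext c
    rfl
  · -- the counit is an isomorphism since θ^* is fully faithful
    exact (θ.lanAdjunction (ModuleCat.{u} R)).counit_isIso_of_R_fully_faithful
  · -- θ^* preserves epimorphisms
    intro M N f hf
    haveI := hf
    haveI : ∀ c : C, Epi ((((Functor.whiskeringLeft C D (ModuleCat.{u} R)).obj θ).map f).app c) :=
      fun c => inferInstanceAs (Epi (f.app (θ.obj c)))
    exact NatTrans.epi_of_epi_app _
  · -- essential image closed under subobjects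
    intro M N i hi hN
    obtain ⟨N₀, ⟨ι⟩⟩ := hN
    haveI := hi
    set j : M ⟶ θ ⋙ N₀ := i ≫ ι.inv with hj'
    haveI : Mono j := mono_comp _ _
    have hj : ∀ c, Mono (j.app c) := fun c => inferInstance
    exact ⟨push θ j e.symm h1 hmor hj, ⟨pushIso θ j e.symm h1 hmor hj h2⟩⟩
end

section
/- Let R be a commutative ring and G an R-perfect group. Let M be an R[G]-module and M₀ ⊆ M an R[G]-submodule such that G acts trivially on M₀ (g·x = x for all g ∈ G and x ∈ M₀) and G acts trivially on the quotient module M/M₀. Then G acts trivially on M. -/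
/-- A group `G` is `R`-perfect if `G^{ab} ⊗_ℤ R = 0`. -/
def IsRPerfect (R : Type*) [CommRing R] (G : Type*) [Group G] : Prop :=
  Subsingleton (TensorProduct ℤ (Additive (Abelianization G)) R)

/-- Let `R` be a commutative ring and `G` an `R`-perfect group.  Let `M` be an
`R[G]`-module (an `R`-module with a `G`-action by `R`-linear maps) and `M₀ ⊆ M` an
`R[G]`-submodule such that `G` acts trivially on `M₀` and on the quotient `M/M₀`
(i.e. `g • x - x ∈ M₀` for all `g`, `x`).  Then `G` acts trivially on `M`. -/
theorem trivial_action_of_RPerfect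
    (R : Type*) [CommRing R] (G : Type*) [Group G] (hG : IsRPerfect R G)
    (M : Type*) [AddCommGroup M] [Module R M]
    [DistribMulAction G M] [SMulCommClass G R M]
    (M₀ : Submodule R M)
    (hstable : ∀ (g : G) (x : M), x ∈ M₀ → g • x ∈ M₀)
    (htriv₀ : ∀ (g : G) (x : M), x ∈ M₀ → g • x = x)
    (htrivQ : ∀ (g : G) (x : M), g • x - x ∈ M₀) :
    ∀ (g : G) (x : M), g • x = x := by
  intro g x
  -- the crossed homomorphism g ↦ g • x - x is an honest homomorphism here
  have hone : (1 : G) • x - x = 0 := by rw [one_smul]; exact sub_self x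
  have hmul : ∀ a b : G, (a * b) • x - x = (a • x - x) + (b • x - x) := by
    intro a b
    have h1 : a • (b • x - x) = b • x - x := htriv₀ a _ (htrivQ b x)
    calc (a * b) • x - x = a • (b • x - x) + (a • x - x) := by
          rw [mul_smul, smul_sub]; abel
      _ = (a • x - x) + (b • x - x) := by rw [h1]; abel
  let f : G →* Multiplicative M₀ :=
    { toFun := fun a => Multiplicative.ofAdd ⟨a • x - x, htrivQ a x⟩
      map_one' := congrArg Multiplicative.ofAdd (Subtype.ext hone)
      map_mul' := fun a b => congrArg Multiplicative.ofAdd (Subtype.ext (hmul a b)) }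
  let ψ : Additive (Abelianization G) →ₗ[ℤ] M₀ :=
    (MonoidHom.toAdditiveLeft (Abelianization.lift f)).toIntLinearMap
  let B : Additive (Abelianization G) →ₗ[ℤ] R →ₗ[ℤ] M₀ :=
    LinearMap.mk₂ ℤ (fun a r => r • ψ a)
      (fun a a' r => by rw [map_add, smul_add])
      (fun n a r => by rw [map_smul, smul_comm])
      (fun a r r' => by rw [add_smul])
      (fun n a r => by rw [smul_assoc])
  haveI : Subsingleton (TensorProduct ℤ (Additive (Abelianization G)) R) := hG
  have h0 : (Additive.ofMul (Abelianization.of g)) ⊗ₜ[ℤ] (1 : R)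
      = (0 : TensorProduct ℤ (Additive (Abelianization G)) R) := Subsingleton.elim _ _
  have h1 := congrArg (TensorProduct.lift B) h0
  rw [map_zero, TensorProduct.lift.tmul] at h1
  rw [LinearMap.mk₂_apply, one_smul] at h1
  have h2 : ψ (Additive.ofMul (Abelianization.of g)) = ⟨g • x - x, htrivQ g x⟩ := rfl
  rw [h2] at h1
  have h3 : g • x - x = 0 := congrArg Subtype.val h1
  exact sub_eq_zero.mp h3
end
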